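/- arXiv:2012.00416 — 6 statements merged into one kernel-verified Lean document; each statement's English description precedes it below -/
import Mathlib

section
/- Let M ≥ 1, let γ : Pol(O_{J_M}^+) → ℂ[ℤ₂] be the unital *-homomorphism with γ(u_{jk}) = δ_{jk}·t, and let Δ be the comultiplication of Pol(O_{J_M}^+). Then the Hopf kernel {b ∈ Pol(O_{J_M}^+) : (γ ⊗ id)(Δ(b)) = 1 ⊗ b} equals the unital *-subalgebra B' of Pol(O_{J_M}^+) generated by all products u_{jk}^* u_{ℓm}, 1 ≤ j,k,ℓ,m ≤ 2M. -/
open scoped ComplexOrder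

/-- The defining relations of `Pol(O_F⁺)`: `U` is unitary and `U·F = F·conj(U)`
(equivalently `U = F·conj(U)·F⁻¹`). -/
def OrthRel {ι : Type} [Fintype ι] [DecidableEq ι] {A : Type} [Ring A] [Algebra ℂ A]
    [StarRing A] (F : Matrix ι ι ℂ) (u : Matrix ι ι A) : Prop :=
  u * u.conjTranspose = 1 ∧ u.conjTranspose * u = 1 ∧
    u * F.map (algebraMap ℂ A) = F.map (algebraMap ℂ A) * u.map star

/-- A presentation of the universal unital complex *-algebra `Pol(O_F⁺)`:
a unital complex *-algebra carrying a matrix of generators `u` satisfying the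
defining relations, universal among all such. -/
structure PolO {ι : Type} [Fintype ι] [DecidableEq ι] (F : Matrix ι ι ℂ) where
  carrier : Type
  [isRing : Ring carrier]
  [isAlgebra : Algebra ℂ carrier]
  [isStarRing : StarRing carrier]
  [isStarModule : StarModule ℂ carrier]
  u : Matrix ι ι carrier
  rel : OrthRel F u
  universal : ∀ (B : Type) [Ring B] [Algebra ℂ B] [StarRing B] [StarModule ℂ B]
      (v : Matrix ι ι B), OrthRel F v →
      ∃! φ : carrier →⋆ₐ[ℂ] B, ∀ j k, φ (u j k) = v j k

attribute [instance] PolO.isRing PolO.isAlgebra PolO.isStarRing PolO.isStarModule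

/-- The defining relations of `Pol(U_N⁺)`: both `U` and `conj(U)` are unitary. -/
def BiUnitary {ι : Type} [Fintype ι] [DecidableEq ι] {A : Type} [Ring A] [Algebra ℂ A]
    [StarRing A] (u : Matrix ι ι A) : Prop :=
  u * u.conjTranspose = 1 ∧ u.conjTranspose * u = 1 ∧
    u.map star * (u.map star).conjTranspose = 1 ∧ (u.map star).conjTranspose * u.map star = 1

/-- A presentation of the universal unital complex *-algebra `Pol(U_N⁺)` (`N = #ι`). -/
structure PolU (ι : Type) [Fintype ι] [DecidableEq ι] where
  carrier : Type
  [isRing : Ring carrier]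
  [isAlgebra : Algebra ℂ carrier]
  [isStarRing : StarRing carrier]
  [isStarModule : StarModule ℂ carrier]
  u : Matrix ι ι carrier
  rel : BiUnitary u
  universal : ∀ (B : Type) [Ring B] [Algebra ℂ B] [StarRing B] [StarModule ℂ B]
      (v : Matrix ι ι B), BiUnitary v →
      ∃! φ : carrier →⋆ₐ[ℂ] B, ∀ j k, φ (u j k) = v j k

attribute [instance] PolU.isRing PolU.isAlgebra PolU.isStarRing PolU.isStarModule

/-- A unital complex *-algebra is RFD if finite-dimensional *-representations
separate its points. -/
def IsRFD (A : Type) [Ring A] [Algebra ℂ A] [StarRing A] : Prop :=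
  ∀ a : A, a ≠ 0 → ∃ (n : ℕ) (π : A →⋆ₐ[ℂ] Matrix (Fin n) (Fin n) ℂ), π a ≠ 0

/-- A tracial state on a unital complex *-algebra. -/
structure TracialState (A : Type) [Ring A] [Algebra ℂ A] [StarRing A] where
  toFun : A →ₗ[ℂ] ℂ
  map_one' : toFun 1 = 1
  nonneg' : ∀ a : A, 0 ≤ toFun (star a * a)
  tracial' : ∀ a b : A, toFun (a * b) = toFun (b * a)

/-- The Kac ideal: elements killed by `τ(a^* a)` for every tracial state `τ`. -/
def kacIdeal (A : Type) [Ring A] [Algebra ℂ A] [StarRing A] : Set A :=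
  {a : A | ∀ τ : TracialState A, τ.toFun (star a * a) = 0}

/-- The RFD ideal: the intersection of the kernels of all finite-dimensional
*-representations. -/
def rfdIdeal (A : Type) [Ring A] [Algebra ℂ A] [StarRing A] : Set A :=
  {a : A | ∀ (n : ℕ) (π : A →⋆ₐ[ℂ] Matrix (Fin n) (Fin n) ℂ), π a = 0}

/-- A subset of a *-ring which is a two-sided ideal closed under the star operation. -/
def IsStarIdeal {A : Type} [Ring A] [StarRing A] (T : Set A) : Prop :=
  (0 : A) ∈ T ∧ (∀ a b, a ∈ T → b ∈ T → a + b ∈ T) ∧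
    (∀ x a, a ∈ T → x * a ∈ T ∧ a * x ∈ T) ∧ (∀ a, a ∈ T → star a ∈ T)

/-- The two-sided *-ideal generated by a set. -/
def starIdealSpan {A : Type} [Ring A] [StarRing A] (S : Set A) : Set A :=
  ⋂₀ {T : Set A | IsStarIdeal T ∧ S ⊆ T}
/-- The standard symplectic matrix `J_M = [[0, I_M], [-I_M, 0]] ∈ M_{2M}(ℂ)`. -/
def symplJ (M : ℕ) : Matrix (Fin (2 * M)) (Fin (2 * M)) ℂ := fun j k =>
  if (j : ℕ) + M = (k : ℕ) then 1 else if (j : ℕ) = (k : ℕ) + M then -1 else 0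

/-- A presentation of the group *-algebra `ℂ[ℤ₂]`: the universal unital complex
*-algebra generated by a self-adjoint element `t` with `t² = 1`. -/
structure GroupAlgZ2 where
  carrier : Type
  [isRing : Ring carrier]
  [isAlgebra : Algebra ℂ carrier]
  [isStarRing : StarRing carrier]
  [isStarModule : StarModule ℂ carrier]
  t : carrier
  star_t : star t = t
  t_sq : t * t = 1
  universal : ∀ (B : Type) [Ring B] [Algebra ℂ B] [StarRing B] [StarModule ℂ B] (s : B),
      star s = s → s * s = 1 → ∃! φ : carrier →⋆ₐ[ℂ] B, φ t = s

attribute [instance] GroupAlgZ2.isRing GroupAlgZ2.isAlgebra GroupAlgZ2.isStarRing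
  GroupAlgZ2.isStarModule

section Aux

open scoped TensorProduct

/-- The shift-by-`M` involution on `Fin (2*M)`. -/
private def sigM (M : ℕ) (j : Fin (2 * M)) : Fin (2 * M) :=
  if h : (j : ℕ) + M < 2 * M then ⟨(j : ℕ) + M, h⟩
  else ⟨(j : ℕ) - M, by have := j.isLt; omega⟩

private lemma sigM_val (M : ℕ) (j : Fin (2 * M)) :
    ((sigM M j : Fin (2 * M)) : ℕ) = if (j : ℕ) + M < 2 * M then (j : ℕ) + M else (j : ℕ) - M := by
  unfold sigM; split <;> rfl

private lemma sigM_sigM (M : ℕ) (j : Fin (2 * M)) : sigM M (sigM M j) = j := by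
  have h1 := j.isLt
  apply Fin.ext
  rw [sigM_val, sigM_val]
  split <;> split <;> omega

private lemma symplJ_row (M : ℕ) (j a : Fin (2 * M)) :
    symplJ M j a = if a = sigM M j then (if (j : ℕ) + M < 2 * M then 1 else -1) else 0 := by
  have h1 := j.isLt
  have h2 := a.isLt
  simp only [Fin.ext_iff, sigM_val]
  unfold symplJ
  split_ifs <;> first | rfl | omega

private lemma symplJ_col (M : ℕ) (a k : Fin (2 * M)) :
    symplJ M a k = if a = sigM M k then (if (k : ℕ) + M < 2 * M then -1 else 1) else 0 := by
  have h1 := k.isLt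
  have h2 := a.isLt
  simp only [Fin.ext_iff, sigM_val]
  unfold symplJ
  split_ifs <;> first | rfl | omega

end Aux
section Aux2

private lemma pm_mul {c d : ℂ} (hc : c = 1 ∨ c = -1) (hd : d = 1 ∨ d = -1) :
    c * d = 1 ∨ c * d = -1 := by
  rcases hc with h | h <;> rcases hd with h' | h' <;> subst h <;> subst h' <;> norm_num

private lemma pm_sq {c : ℂ} (hc : c = 1 ∨ c = -1) : c * c = 1 := by
  rcases hc with h | h <;> subst h <;> norm_num

private lemma relE (M : ℕ) (PO : PolO (symplJ M)) (j k : Fin (2 * M)) :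
    PO.u j (sigM M k) * algebraMap ℂ PO.carrier (if (k : ℕ) + M < 2 * M then -1 else 1)
      = algebraMap ℂ PO.carrier (if (j : ℕ) + M < 2 * M then 1 else -1)
        * star (PO.u (sigM M j) k) := by
  have h := congrFun (congrFun PO.rel.2.2 j) k
  have hL : ∀ x : Fin (2 * M), symplJ M x k
      = if x = sigM M k then (if (k : ℕ) + M < 2 * M then -1 else 1) else 0 :=
    fun x => symplJ_col M x k
  have hR : ∀ x : Fin (2 * M), symplJ M j x
      = if x = sigM M j then (if (j : ℕ) + M < 2 * M then 1 else -1) else 0 :=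
    fun x => symplJ_row M j x
  simp only [Matrix.mul_apply, Matrix.map_apply] at h
  simp only [hL] at h
  simp only [hR] at h
  simp only [apply_ite (algebraMap ℂ PO.carrier), map_zero, mul_ite, ite_mul, mul_zero,
    zero_mul, Finset.sum_ite_eq', Finset.mem_univ, if_true] at h
  rw [apply_ite (algebraMap ℂ PO.carrier), apply_ite (algebraMap ℂ PO.carrier), mul_ite, ite_mul]
  exact h

private lemma ukey (M : ℕ) (PO : PolO (symplJ M)) (p k : Fin (2 * M)) :
    ∃ (a b : Fin (2 * M)) (ε : ℂ), (ε = 1 ∨ ε = -1) ∧ star (PO.u p k) = ε • PO.u a b := by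
  have h := relE M PO (sigM M p) k
  rw [sigM_sigM] at h
  set c1 : ℂ := if (k : ℕ) + M < 2 * M then -1 else 1 with hc1
  set c2 : ℂ := if ((sigM M p : Fin (2 * M)) : ℕ) + M < 2 * M then (1 : ℂ) else -1 with hc2
  have h1 : c1 = 1 ∨ c1 = -1 := by rw [hc1]; split <;> [right; left] <;> rfl
  have h2 : c2 = 1 ∨ c2 = -1 := by rw [hc2]; split <;> [left; right] <;> rfl
  refine ⟨sigM M p, sigM M k, c2 * c1, pm_mul h2 h1, ?_⟩
  calc star (PO.u p k) = (c2 * c2) • star (PO.u p k) := by rw [pm_sq h2, one_smul]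
    _ = c2 • (algebraMap ℂ PO.carrier c2 * star (PO.u p k)) := by
        rw [mul_smul, Algebra.smul_def c2 (star (PO.u p k))]
    _ = c2 • (PO.u (sigM M p) (sigM M k) * algebraMap ℂ PO.carrier c1) := by rw [← h]
    _ = c2 • (c1 • PO.u (sigM M p) (sigM M k)) := by
        rw [← Algebra.commutes, ← Algebra.smul_def]
    _ = (c2 * c1) • PO.u (sigM M p) (sigM M k) := (mul_smul _ _ _).symm

private lemma ukey' (M : ℕ) (PO : PolO (symplJ M)) (a b : Fin (2 * M)) :
    ∃ (p q : Fin (2 * M)) (ε : ℂ), (ε = 1 ∨ ε = -1) ∧ PO.u a b = ε • star (PO.u p q) := by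
  have h := relE M PO a (sigM M b)
  rw [sigM_sigM] at h
  set c1 : ℂ := if ((sigM M b : Fin (2 * M)) : ℕ) + M < 2 * M then (-1 : ℂ) else 1 with hc1
  set c2 : ℂ := if (a : ℕ) + M < 2 * M then (1 : ℂ) else -1 with hc2
  have h1 : c1 = 1 ∨ c1 = -1 := by rw [hc1]; split <;> [right; left] <;> rfl
  have h2 : c2 = 1 ∨ c2 = -1 := by rw [hc2]; split <;> [left; right] <;> rfl
  refine ⟨sigM M a, sigM M b, c2 * c1, pm_mul h2 h1, ?_⟩
  calc PO.u a b = PO.u a b * algebraMap ℂ PO.carrier (c1 * c1) := by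
        rw [pm_sq h1, map_one, mul_one]
    _ = (PO.u a b * algebraMap ℂ PO.carrier c1) * algebraMap ℂ PO.carrier c1 := by
        rw [map_mul, mul_assoc]
    _ = (algebraMap ℂ PO.carrier c2 * star (PO.u (sigM M a) (sigM M b)))
          * algebraMap ℂ PO.carrier c1 := by rw [h]
    _ = (c2 * c1) • star (PO.u (sigM M a) (sigM M b)) := by
        rw [mul_assoc, ← Algebra.commutes c1, ← mul_assoc, ← map_mul, ← Algebra.smul_def]

end Aux2
section Aux3

private def word {M : ℕ} (PO : PolO (symplJ M)) (l : List (Fin (2 * M) × Fin (2 * M))) :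
    PO.carrier :=
  (l.map fun p => PO.u p.1 p.2).prod

private lemma word_nil {M : ℕ} (PO : PolO (symplJ M)) : word PO [] = 1 := rfl

private lemma word_cons {M : ℕ} (PO : PolO (symplJ M)) (p : Fin (2 * M) × Fin (2 * M))
    (l : List (Fin (2 * M) × Fin (2 * M))) : word PO (p :: l) = PO.u p.1 p.2 * word PO l := by
  simp [word]

private lemma word_append {M : ℕ} (PO : PolO (symplJ M))
    (l l' : List (Fin (2 * M) × Fin (2 * M))) : word PO (l ++ l') = word PO l * word PO l' := by
  simp [word]

private lemma span_mul_span_le {A : Type} [Ring A] [Algebra ℂ A] {s t : Set A}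
    {U : Submodule ℂ A} (h : ∀ x ∈ s, ∀ y ∈ t, x * y ∈ U) {a b : A}
    (ha : a ∈ Submodule.span ℂ s) (hb : b ∈ Submodule.span ℂ t) : a * b ∈ U := by
  induction ha using Submodule.span_induction with
  | mem x hx =>
    induction hb using Submodule.span_induction with
    | mem y hy => exact h x hx y hy
    | zero => rw [mul_zero]; exact U.zero_mem
    | add y z _ _ hy hz => rw [mul_add]; exact U.add_mem hy hz
    | smul c y _ hy => rw [mul_smul_comm]; exact U.smul_mem c hy
  | zero => rw [zero_mul]; exact U.zero_mem
  | add x y _ _ hx hy => rw [add_mul]; exact U.add_mem hx hy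
  | smul c x _ hx => rw [smul_mul_assoc]; exact U.smul_mem c hx

end Aux3
section Aux4

private lemma mem_adjoin_u (M : ℕ) (PO : PolO (symplJ M)) (a : PO.carrier) :
    a ∈ Algebra.adjoin ℂ {x : PO.carrier | ∃ j k, x = PO.u j k} := by
  have hstar : ∀ x ∈ Algebra.adjoin ℂ {x : PO.carrier | ∃ j k, x = PO.u j k},
      star x ∈ Algebra.adjoin ℂ {x : PO.carrier | ∃ j k, x = PO.u j k} := by
    intro x hx
    induction hx using Algebra.adjoin_induction with
    | mem x hx =>
      obtain ⟨j, k, rfl⟩ := hx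
      obtain ⟨c, d, ε, _, he⟩ := ukey M PO j k
      rw [he]
      refine Subalgebra.smul_mem _ ?_ ε
      exact Algebra.subset_adjoin ⟨c, d, rfl⟩
    | algebraMap r =>
      rw [Algebra.algebraMap_eq_smul_one, star_smul, star_one]
      exact Subalgebra.smul_mem _ (one_mem _) _
    | add x y _ _ hx hy => rw [star_add]; exact add_mem hx hy
    | mul x y _ _ hx hy => rw [star_mul]; exact mul_mem hy hx
  set S1 : StarSubalgebra ℂ PO.carrier :=
    { toSubalgebra := Algebra.adjoin ℂ {x : PO.carrier | ∃ j k, x = PO.u j k}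
      star_mem' := fun hx => hstar _ hx } with hS1
  set v : Matrix (Fin (2 * M)) (Fin (2 * M)) S1 :=
    fun j k => (⟨PO.u j k, Algebra.subset_adjoin ⟨j, k, rfl⟩⟩ : S1) with hv
  have hrel : OrthRel (symplJ M) v := by
    refine ⟨?_, ?_, ?_⟩
    · ext j k
      have h := congrFun (congrFun PO.rel.1 j) k
      simp only [Matrix.mul_apply, Matrix.conjTranspose_apply, Matrix.one_apply] at h ⊢
      simp only [hv, AddSubmonoidClass.coe_finset_sum, MulMemClass.coe_mul,
        StarMemClass.coe_star, OneMemClass.coe_one, ZeroMemClass.coe_zero]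
      split_ifs at h ⊢ <;> simpa using h
    · ext j k
      have h := congrFun (congrFun PO.rel.2.1 j) k
      simp only [Matrix.mul_apply, Matrix.conjTranspose_apply, Matrix.one_apply] at h ⊢
      simp only [hv, AddSubmonoidClass.coe_finset_sum, MulMemClass.coe_mul,
        StarMemClass.coe_star, OneMemClass.coe_one, ZeroMemClass.coe_zero]
      split_ifs at h ⊢ <;> simpa using h
    · ext j k
      have h := congrFun (congrFun PO.rel.2.2 j) k
      simp only [Matrix.mul_apply, Matrix.map_apply] at h ⊢
      have hc : ∀ c : ℂ, ((algebraMap ℂ S1 c : S1) : PO.carrier) = algebraMap ℂ PO.carrier c :=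
        fun c => rfl
      simp only [hv, AddSubmonoidClass.coe_finset_sum, MulMemClass.coe_mul,
        StarMemClass.coe_star, hc]
      exact h
  obtain ⟨φ, hφ, _⟩ := PO.universal S1 v hrel
  obtain ⟨ψ0, hψ0, hu⟩ := PO.universal PO.carrier PO.u PO.rel
  have e1 : S1.subtype.comp φ = ψ0 := hu _ (fun j k => by simp [hφ, hv])
  have e2 : StarAlgHom.id ℂ PO.carrier = ψ0 := hu _ (fun j k => rfl)
  have e3 : S1.subtype (φ a) = a := by
    have := DFunLike.congr_fun (e1.trans e2.symm) a
    simpa using this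
  rw [← e3]
  exact (φ a).2

end Aux4
open scoped TensorProduct in
/-- the Hopf kernel of the central character `γ` of `Pol(O_{J_M}⁺)`,
i.e. `{b : (γ ⊗ id)(Δ(b)) = 1 ⊗ b}`, equals the unital *-subalgebra generated by the
products `u_{jk}^* u_{ℓm}`. -/
theorem polO_hopf_kernel (M : ℕ) (hM : 1 ≤ M) (PO : PolO (symplJ M)) (Z : GroupAlgZ2)
    (γ : PO.carrier →⋆ₐ[ℂ] Z.carrier)
    (hγ : ∀ j k : Fin (2 * M), γ (PO.u j k) = if j = k then Z.t else 0)
    (Δ : PO.carrier →ₐ[ℂ] PO.carrier ⊗[ℂ] PO.carrier)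
    (hΔ : ∀ j k : Fin (2 * M),
      Δ (PO.u j k) = ∑ l : Fin (2 * M), PO.u j l ⊗ₜ[ℂ] PO.u l k) :
    {b : PO.carrier |
        Algebra.TensorProduct.map γ.toAlgHom (AlgHom.id ℂ PO.carrier) (Δ b) = 1 ⊗ₜ[ℂ] b} =
      (StarAlgebra.adjoin ℂ
        {x : PO.carrier | ∃ j k l m : Fin (2 * M), x = star (PO.u j k) * PO.u l m} :
          StarSubalgebra ℂ PO.carrier) := by
  classical
  set Ψ : PO.carrier →ₐ[ℂ] Z.carrier ⊗[ℂ] PO.carrier :=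
    (Algebra.TensorProduct.map γ.toAlgHom (AlgHom.id ℂ PO.carrier)).comp Δ with hΨdef
  set B' : StarSubalgebra ℂ PO.carrier := StarAlgebra.adjoin ℂ
    {x : PO.carrier | ∃ j k l m : Fin (2 * M), x = star (PO.u j k) * PO.u l m} with hB'
  set Ev : Submodule ℂ PO.carrier :=
    Submodule.span ℂ {x | ∃ l, l.length % 2 = 0 ∧ x = word PO l} with hEv
  set Od : Submodule ℂ PO.carrier :=
    Submodule.span ℂ {x | ∃ l, l.length % 2 = 1 ∧ x = word PO l} with hOd
  -- Ψ on generators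
  have ψu : ∀ j k, Ψ (PO.u j k) = Z.t ⊗ₜ[ℂ] PO.u j k := by
    intro j k
    rw [hΨdef]
    simp only [AlgHom.coe_comp, Function.comp_apply, hΔ, map_sum,
      Algebra.TensorProduct.map_tmul, AlgHom.coe_id, id_eq, StarAlgHom.coe_toAlgHom, hγ]
    simp only [TensorProduct.ite_tmul]
    rw [Finset.sum_ite_eq]
    simp
  have ψword : ∀ l, Ψ (word PO l) = (Z.t ^ l.length) ⊗ₜ[ℂ] word PO l := by
    intro l
    induction l with
    | nil =>
      rw [word_nil, map_one, List.length_nil, pow_zero, Algebra.TensorProduct.one_def]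
    | cons p l ih =>
      rw [word_cons, map_mul, ψu, ih, Algebra.TensorProduct.tmul_mul_tmul, ← word_cons,
        List.length_cons, pow_succ']
  have tpow : ∀ n, n % 2 = 0 → Z.t ^ n = 1 := by
    intro n hn
    obtain ⟨m, rfl⟩ : ∃ m, n = 2 * m := ⟨n / 2, by omega⟩
    have h2 : Z.t ^ 2 = 1 := by rw [sq, Z.t_sq]
    rw [pow_mul, h2, one_pow]
  -- membership facts
  have pairB : ∀ a b c d, PO.u a b * PO.u c d ∈ B' := by
    intro a b c d
    obtain ⟨p, q, ε, hε, he⟩ := ukey' M PO a b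
    rw [he, smul_mul_assoc]
    refine SMulMemClass.smul_mem ε ?_
    exact StarAlgebra.subset_adjoin ℂ _ ⟨p, q, c, d, rfl⟩
  have evB' : ∀ n (l : List (Fin (2 * M) × Fin (2 * M))), l.length = n → n % 2 = 0 →
      word PO l ∈ B' := by
    intro n
    induction n using Nat.strong_induction_on with
    | _ n ih =>
      intro l hl hn
      rcases l with _ | ⟨p, _ | ⟨q, rest⟩⟩
      · rw [word_nil]; exact one_mem _
      · simp only [List.length_cons, List.length_nil] at hl; omega
      · simp only [List.length_cons] at hl
        rw [word_cons, word_cons, ← mul_assoc]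
        exact mul_mem (pairB p.1 p.2 q.1 q.2)
          (ih (n - 2) (by omega) rest (by omega) (by omega))
  have EvB' : ∀ x ∈ Ev, x ∈ B' := by
    intro x hx
    induction hx using Submodule.span_induction with
    | mem x hx => obtain ⟨l, hl, rfl⟩ := hx; exact evB' _ l rfl hl
    | zero => exact zero_mem _
    | add x y _ _ hx hy => exact add_mem hx hy
    | smul c x _ hx => exact SMulMemClass.smul_mem c hx
  have wordStar : ∀ l : List (Fin (2 * M) × Fin (2 * M)), star (word PO l) ∈
      Submodule.span ℂ {x | ∃ l' : List (Fin (2 * M) × Fin (2 * M)),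
        l'.length = l.length ∧ x = word PO l'} := by
    intro l
    induction l with
    | nil =>
      rw [word_nil, star_one]
      exact Submodule.subset_span ⟨[], rfl, rfl⟩
    | cons p l ih =>
      rw [word_cons, star_mul]
      obtain ⟨a, b, ε, hε, he⟩ := ukey M PO p.1 p.2
      rw [he, mul_smul_comm]
      refine Submodule.smul_mem _ ε ?_
      refine span_mul_span_le ?_ ih
        (Submodule.subset_span (Set.mem_singleton (PO.u a b)))
      rintro x ⟨l', hl', rfl⟩ y hy
      rw [Set.mem_singleton_iff] at hy
      subst hy
      refine Submodule.subset_span ⟨l' ++ [(a, b)], ?_, ?_⟩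
      · simp [hl']
      · rw [word_append, word_cons, word_nil, mul_one]
  have EvStar : ∀ x ∈ Ev, star x ∈ Ev := by
    intro x hx
    induction hx using Submodule.span_induction with
    | mem x hx =>
      obtain ⟨l, hl, rfl⟩ := hx
      refine Submodule.span_le.mpr ?_ (wordStar l)
      rintro y ⟨l', hl', rfl⟩
      exact Submodule.subset_span ⟨l', by omega, rfl⟩
    | zero => rw [star_zero]; exact zero_mem _
    | add x y _ _ hx hy => rw [star_add]; exact add_mem hx hy
    | smul c x _ hx => rw [star_smul]; exact Submodule.smul_mem _ _ hx
  have mulEE : ∀ x ∈ Ev, ∀ y ∈ Ev, x * y ∈ Ev := by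
    intro x hx y hy
    refine span_mul_span_le ?_ hx hy
    rintro x ⟨l1, h1, rfl⟩ y ⟨l2, h2, rfl⟩
    exact Submodule.subset_span ⟨l1 ++ l2, by rw [List.length_append]; omega,
      (word_append PO l1 l2).symm⟩
  have mulEO : ∀ x ∈ Ev, ∀ y ∈ Od, x * y ∈ Od := by
    intro x hx y hy
    refine span_mul_span_le ?_ hx hy
    rintro x ⟨l1, h1, rfl⟩ y ⟨l2, h2, rfl⟩
    exact Submodule.subset_span ⟨l1 ++ l2, by rw [List.length_append]; omega,
      (word_append PO l1 l2).symm⟩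
  have mulOE : ∀ x ∈ Od, ∀ y ∈ Ev, x * y ∈ Od := by
    intro x hx y hy
    refine span_mul_span_le ?_ hx hy
    rintro x ⟨l1, h1, rfl⟩ y ⟨l2, h2, rfl⟩
    exact Submodule.subset_span ⟨l1 ++ l2, by rw [List.length_append]; omega,
      (word_append PO l1 l2).symm⟩
  have mulOO : ∀ x ∈ Od, ∀ y ∈ Od, x * y ∈ Ev := by
    intro x hx y hy
    refine span_mul_span_le ?_ hx hy
    rintro x ⟨l1, h1, rfl⟩ y ⟨l2, h2, rfl⟩
    exact Submodule.subset_span ⟨l1 ++ l2, by rw [List.length_append]; omega,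
      (word_append PO l1 l2).symm⟩
  have B'Ev : ∀ x ∈ B', x ∈ Ev := by
    intro x hx
    rw [hB'] at hx
    induction hx using StarAlgebra.adjoin_induction with
    | mem x hx =>
      obtain ⟨j, k, l, m, rfl⟩ := hx
      obtain ⟨a, b, ε, hε, he⟩ := ukey M PO j k
      rw [he, smul_mul_assoc]
      refine Submodule.smul_mem _ ε (Submodule.subset_span ⟨[(a, b), (l, m)], by norm_num, ?_⟩)
      rw [word_cons, word_cons, word_nil, mul_one]
    | algebraMap r =>
      rw [Algebra.algebraMap_eq_smul_one]
      exact Submodule.smul_mem _ _ (Submodule.subset_span ⟨[], rfl, rfl⟩)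
    | add x y _ _ hx hy => exact add_mem hx hy
    | mul x y _ _ hx hy => exact mulEE x hx y hy
    | star x _ hx => exact EvStar x hx
  have ψEv : ∀ x ∈ Ev, Ψ x = 1 ⊗ₜ[ℂ] x := by
    intro x hx
    induction hx using Submodule.span_induction with
    | mem x hx =>
      obtain ⟨l, hl, rfl⟩ := hx
      rw [ψword, tpow _ hl]
    | zero => rw [map_zero, TensorProduct.tmul_zero]
    | add x y _ _ hx hy => rw [map_add, hx, hy, TensorProduct.tmul_add]
    | smul c x _ hx => rw [map_smul, hx, TensorProduct.tmul_smul]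
  -- decomposition of arbitrary elements
  have main : ∀ x : PO.carrier, ∃ be bo, be ∈ Ev ∧ bo ∈ Od ∧ x = be + bo ∧
      Ψ x = 1 ⊗ₜ[ℂ] be + Z.t ⊗ₜ[ℂ] bo := by
    intro x
    have hx := mem_adjoin_u M PO x
    induction hx using Algebra.adjoin_induction with
    | mem x hx =>
      obtain ⟨j, k, rfl⟩ := hx
      refine ⟨0, PO.u j k, zero_mem _,
        Submodule.subset_span ⟨[(j, k)], rfl, by rw [word_cons, word_nil, mul_one]⟩,
        (zero_add _).symm, ?_⟩
      rw [ψu, TensorProduct.tmul_zero, zero_add]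
    | algebraMap r =>
      refine ⟨algebraMap ℂ PO.carrier r, 0, ?_, zero_mem _, (add_zero _).symm, ?_⟩
      · rw [Algebra.algebraMap_eq_smul_one]
        exact Submodule.smul_mem _ _ (Submodule.subset_span ⟨[], rfl, rfl⟩)
      · rw [TensorProduct.tmul_zero, add_zero, AlgHom.commutes,
          Algebra.TensorProduct.algebraMap_apply, Algebra.algebraMap_eq_smul_one,
          TensorProduct.smul_tmul]
        rw [Algebra.algebraMap_eq_smul_one]
    | add x y _ _ ihx ihy =>
      obtain ⟨be, bo, hbe, hbo, hxe, hxψ⟩ := ihx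
      obtain ⟨be', bo', hbe', hbo', hye, hyψ⟩ := ihy
      refine ⟨be + be', bo + bo', add_mem hbe hbe', add_mem hbo hbo', by rw [hxe, hye]; abel, ?_⟩
      rw [map_add, hxψ, hyψ, TensorProduct.tmul_add, TensorProduct.tmul_add]
      abel
    | mul x y _ _ ihx ihy =>
      obtain ⟨be, bo, hbe, hbo, hxe, hxψ⟩ := ihx
      obtain ⟨be', bo', hbe', hbo', hye, hyψ⟩ := ihy
      refine ⟨be * be' + bo * bo', be * bo' + bo * be',
        add_mem (mulEE be hbe be' hbe') (mulOO bo hbo bo' hbo'),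
        add_mem (mulEO be hbe bo' hbo') (mulOE bo hbo be' hbe'),
        by rw [hxe, hye, mul_add, add_mul, add_mul]; abel, ?_⟩
      rw [map_mul, hxψ, hyψ]
      simp only [add_mul, mul_add, Algebra.TensorProduct.tmul_mul_tmul, one_mul, mul_one,
        Z.t_sq, TensorProduct.tmul_add]
      abel
  -- the separating functional on ℂ[ℤ₂]
  obtain ⟨ep, hep, -⟩ := Z.universal ℂ 1 (star_one ℂ) (one_mul 1)
  obtain ⟨em, hem, -⟩ := Z.universal ℂ (-1) (by simp) (by norm_num)
  set f : Z.carrier →ₗ[ℂ] ℂ := ep.toAlgHom.toLinearMap - em.toAlgHom.toLinearMap with hf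
  have hf1 : f 1 = 0 := by simp [hf]
  have hft : f Z.t = 2 := by
    simp only [hf, LinearMap.sub_apply, AlgHom.toLinearMap_apply, StarAlgHom.coe_toAlgHom,
      hep, hem]
    norm_num
  set g : Z.carrier ⊗[ℂ] PO.carrier →ₗ[ℂ] PO.carrier :=
    TensorProduct.lift ((LinearMap.lsmul ℂ PO.carrier).comp f) with hg
  have hgt : ∀ z a, g (z ⊗ₜ[ℂ] a) = f z • a := fun z a => rfl
  -- conclude
  ext b
  simp only [Set.mem_setOf_eq, SetLike.mem_coe]
  constructor
  · intro hb
    obtain ⟨be, bo, hbe, hbo, hbeq, hbψ⟩ := main b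
    have h2 : (1 : Z.carrier) ⊗ₜ[ℂ] b = 1 ⊗ₜ[ℂ] be + Z.t ⊗ₜ[ℂ] bo := by
      rw [← hb]; exact hbψ
    have h3 := congrArg g h2
    simp only [map_add, hgt, hf1, hft, zero_smul, zero_add] at h3
    have hbo0 : bo = 0 := by
      have h4 : (2 : ℂ) • bo = 0 := h3.symm
      simpa using h4
    rw [hbeq, hbo0, add_zero]
    exact EvB' be hbe
  · intro hb
    exact ψEv b (B'Ev b hb)
end

section
/- Let M ≥ 1, q ∈ (0,1), ε ∈ {−1,1}, and F = [[0, q·I_M], [ε·q^{-1}·I_M, 0]] ∈ M_{2M}(ℂ). In the *-algebra Pol(O_F^+), the following identity holds: Σ_{j,ℓ=1}^{M} (u_{jℓ}·u_{jℓ}^* − u_{jℓ}^*·u_{jℓ}) = (1 − q⁴)·Σ_{j,ℓ=1}^{M} u_{j+M,ℓ}^*·u_{j+M,ℓ}. -/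
open scoped ComplexOrder

/-- The matrix `F = [[0, q·I_M], [ε·q⁻¹·I_M, 0]] ∈ M_{2M}(ℂ)`. -/
noncomputable def Fqe (M : ℕ) (q ε : ℝ) : Matrix (Fin (2 * M)) (Fin (2 * M)) ℂ := fun j k =>
  if (j : ℕ) + M = (k : ℕ) then (q : ℂ)
  else if (j : ℕ) = (k : ℕ) + M then ((ε * q⁻¹ : ℝ) : ℂ) else 0

/-- The embedding of `{1,…,M}` as the first `M` indices of `{1,…,2M}`. -/
def loIdx {M : ℕ} (j : Fin M) : Fin (2 * M) := ⟨(j : ℕ), by have := j.isLt; omega⟩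

/-- The embedding of `{1,…,M}` as the last `M` indices of `{1,…,2M}` (`j ↦ j + M`). -/
def hiIdx {M : ℕ} (j : Fin M) : Fin (2 * M) := ⟨(j : ℕ) + M, by have := j.isLt; omega⟩

/-!
Evaluating `U·F = F·conj(U)` at the entry `(j, ℓ)` of the upper-left block gives
`(ε/q)·u_{j,ℓ+M} = q·u_{j+M,ℓ}^*`, so `u_{j,ℓ+M} u_{j,ℓ+M}^* = q⁴ u_{j+M,ℓ}^* u_{j+M,ℓ}`
because `ε² = 1`. Hence the first `M` rows of `U U^* = 1` give
`Σ u_{jℓ}u_{jℓ}^* + q⁴ Σ u_{j+M,ℓ}^* u_{j+M,ℓ} = M`, while the first `M` columns of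
`U^* U = 1` give `Σ u_{jℓ}^*u_{jℓ} + Σ u_{j+M,ℓ}^* u_{j+M,ℓ} = M`; subtract.
-/

lemma Fin.sum_two_mul_eq_sum_loIdx_add_sum_hiIdx {β : Type*} [AddCommMonoid β] {M : ℕ}
    (f : Fin (2 * M) → β) :
    ∑ k, f k = ∑ k : Fin M, f (loIdx k) + ∑ k : Fin M, f (hiIdx k) := by
  rw [← (finCongr (two_mul M)).symm.sum_comp f, Fin.sum_univ_add]
  congr 1
  refine Finset.sum_congr rfl fun k _ => congrArg f (Fin.ext ?_)
  simp [hiIdx, add_comm]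

section Fqe

variable {M : ℕ} (q ε : ℝ)

lemma Fqe_loIdx_left (j : Fin M) (k : Fin (2 * M)) :
    Fqe M q ε (loIdx j) k = if hiIdx j = k then (q : ℂ) else 0 := by
  have := j.isLt
  unfold Fqe
  split_ifs <;> simp_all [Fin.ext_iff, loIdx, hiIdx]
  omega

lemma Fqe_loIdx_right (k : Fin (2 * M)) (l : Fin M) :
    Fqe M q ε k (loIdx l) = if k = hiIdx l then ((ε * q⁻¹ : ℝ) : ℂ) else 0 := by
  have := l.isLt
  unfold Fqe
  split_ifs <;> simp_all [Fin.ext_iff, loIdx, hiIdx] <;> omega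

end Fqe

section Relations

variable {A : Type} [Ring A] [StarRing A] {M : ℕ} (u : Matrix (Fin (2 * M)) (Fin (2 * M)) A)

lemma sum_loIdx_mul_star_add_sum_hiIdx (hU : u * u.conjTranspose = 1) :
    ∑ j : Fin M, ∑ l : Fin M, u (loIdx j) (loIdx l) * star (u (loIdx j) (loIdx l)) +
      ∑ j : Fin M, ∑ l : Fin M, u (loIdx j) (hiIdx l) * star (u (loIdx j) (hiIdx l)) =
      (M : A) := by
  have hrow (j : Fin M) := congr_fun₂ hU (loIdx j) (loIdx j)
  simp only [Matrix.mul_apply, Matrix.conjTranspose_apply, Matrix.one_apply_eq,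
    Fin.sum_two_mul_eq_sum_loIdx_add_sum_hiIdx] at hrow
  simp [← Finset.sum_add_distrib, hrow]

lemma sum_star_loIdx_mul_add_sum_hiIdx (hU : u.conjTranspose * u = 1) :
    ∑ j : Fin M, ∑ l : Fin M, star (u (loIdx j) (loIdx l)) * u (loIdx j) (loIdx l) +
      ∑ j : Fin M, ∑ l : Fin M, star (u (hiIdx j) (loIdx l)) * u (hiIdx j) (loIdx l) =
      (M : A) := by
  have hcol (l : Fin M) := congr_fun₂ hU (loIdx l) (loIdx l)
  simp only [Matrix.mul_apply, Matrix.conjTranspose_apply, Matrix.one_apply_eq,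
    Fin.sum_two_mul_eq_sum_loIdx_add_sum_hiIdx] at hcol
  rw [Finset.sum_comm,
    Finset.sum_comm (f := fun j l => star (u (hiIdx j) (loIdx l)) * u (hiIdx j) (loIdx l)),
    ← Finset.sum_add_distrib]
  simp [hcol]

variable [Algebra ℂ A] {q ε : ℝ}
  (hF : u * (Fqe M q ε).map (algebraMap ℂ A) = (Fqe M q ε).map (algebraMap ℂ A) * u.map star)
include hF

lemma smul_loIdx_hiIdx_eq_smul_star (j l : Fin M) :
    ((ε * q⁻¹ : ℝ) : ℂ) • u (loIdx j) (hiIdx l) = (q : ℂ) • star (u (hiIdx j) (loIdx l)) := by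
  have h := congr_fun₂ hF (loIdx j) (loIdx l)
  simp only [Matrix.mul_apply, Matrix.map_apply, Fqe_loIdx_left, Fqe_loIdx_right,
    apply_ite (algebraMap ℂ A), map_zero, mul_ite, ite_mul, mul_zero, zero_mul,
    Finset.sum_ite_eq, Finset.sum_ite_eq', Finset.mem_univ, if_true] at h
  rwa [Algebra.smul_def, Algebra.smul_def, Algebra.commutes]

lemma loIdx_hiIdx_eq_smul_star (hq : q ≠ 0) (hε : ε ^ 2 = 1) (j l : Fin M) :
    u (loIdx j) (hiIdx l) = ((ε * q ^ 2 : ℝ) : ℂ) • star (u (hiIdx j) (loIdx l)) := by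
  have h := congrArg (((ε * q : ℝ) : ℂ) • ·) (smul_loIdx_hiIdx_eq_smul_star u hF j l)
  simp only [smul_smul, ← Complex.ofReal_mul] at h
  convert h using 2
  · rw [mul_mul_mul_comm, mul_inv_cancel₀ hq, ← sq, hε, one_mul, Complex.ofReal_one, one_smul]
  · push_cast; ring

lemma loIdx_hiIdx_mul_star [StarModule ℂ A] (hq : q ≠ 0) (hε : ε ^ 2 = 1) (j l : Fin M) :
    u (loIdx j) (hiIdx l) * star (u (loIdx j) (hiIdx l)) =
      ((q ^ 4 : ℝ) : ℂ) • (star (u (hiIdx j) (loIdx l)) * u (hiIdx j) (loIdx l)) := by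
  rw [loIdx_hiIdx_eq_smul_star u hF hq hε, star_smul, star_star, smul_mul_smul_comm,
    Complex.star_def, Complex.conj_ofReal, ← Complex.ofReal_mul]
  congr 2
  linear_combination q ^ 4 * hε

end Relations

theorem polO_one_block_commutator_identity_general (M : ℕ) (q ε : ℝ)
    (hq0 : 0 < q) (hε : ε = 1 ∨ ε = -1) (P : PolO (Fqe M q ε)) :
    ∑ j : Fin M, ∑ l : Fin M,
        (P.u (loIdx j) (loIdx l) * star (P.u (loIdx j) (loIdx l)) -
          star (P.u (loIdx j) (loIdx l)) * P.u (loIdx j) (loIdx l)) =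
      ((1 - q ^ 4 : ℝ) : ℂ) •
        ∑ j : Fin M, ∑ l : Fin M,
          star (P.u (hiIdx j) (loIdx l)) * P.u (hiIdx j) (loIdx l) := by
  obtain ⟨hUU, hUU', hF⟩ := P.rel
  have hε2 : ε ^ 2 = 1 := by rcases hε with rfl | rfl <;> norm_num
  have hrows := sum_loIdx_mul_star_add_sum_hiIdx P.u hUU
  simp only [loIdx_hiIdx_mul_star P.u hF hq0.ne' hε2, ← Finset.smul_sum] at hrows
  have hcols := sum_star_loIdx_mul_add_sum_hiIdx P.u hUU'
  simp only [Finset.sum_sub_distrib]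
  rw [eq_sub_of_add_eq hrows, eq_sub_of_add_eq hcols, Complex.ofReal_sub, Complex.ofReal_one,
    sub_smul, one_smul]
  abel

/-- in `Pol(O_F⁺)` for `F = [[0, q·I_M], [ε·q⁻¹·I_M, 0]]`, one has
`Σ_{j,ℓ=1}^M (u_{jℓ}u_{jℓ}^* − u_{jℓ}^*u_{jℓ}) = (1−q⁴)·Σ_{j,ℓ=1}^M u_{j+M,ℓ}^* u_{j+M,ℓ}`. -/
theorem polO_one_block_commutator_identity (M : ℕ) (hM : 1 ≤ M) (q ε : ℝ)
    (hq0 : 0 < q) (hq1 : q < 1) (hε : ε = 1 ∨ ε = -1) (P : PolO (Fqe M q ε)) :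
    ∑ j : Fin M, ∑ l : Fin M,
        (P.u (loIdx j) (loIdx l) * star (P.u (loIdx j) (loIdx l)) -
          star (P.u (loIdx j) (loIdx l)) * P.u (loIdx j) (loIdx l)) =
      ((1 - q ^ 4 : ℝ) : ℂ) •
        ∑ j : Fin M, ∑ l : Fin M,
          star (P.u (hiIdx j) (loIdx l)) * P.u (hiIdx j) (loIdx l) :=
  polO_one_block_commutator_identity_general M q ε hq0 hε P
end

section
/- Let M ≥ 1, q ∈ (0,1), ε ∈ {−1,1}, and F = [[0, q·I_M], [ε·q^{-1}·I_M, 0]] ∈ M_{2M}(ℂ). Then for every tracial state τ on Pol(O_F^+) and all 1 ≤ j,ℓ ≤ M one has τ(u_{j+M,ℓ}^*·u_{j+M,ℓ}) = 0. In particular, every generator u_{jk} with M+1 ≤ j ≤ 2M and 1 ≤ k ≤ M belongs to the Kac ideal J_KAC(Pol(O_F^+)). -/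
open scoped ComplexOrder

/-!
Write `U = [[a, b], [c, d]]` in `M × M` blocks. The relation `U F = F Ū` forces `d = ā` and
`b = (q² / ε) c̄`. Applying `τ ∘ Tr` to the diagonal blocks of `U U* = 1` and using traciality gives
`τ Tr(c* c) + τ Tr(a* a) = M` and `τ Tr(a* a) + q⁴ τ Tr(c* c) = M`, so `τ Tr(c* c) = 0` as `q⁴ ≠ 1`;
positivity of `τ` then kills every summand `τ(c_{jl}* c_{jl})`.
-/

open Matrix

namespace TracialState

variable {A : Type} [Ring A] [Algebra ℂ A] [StarRing A] (τ : TracialState A)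
  {m n : Type} [Fintype m] [Fintype n]

theorem map_trace_mul_conjTranspose (x : Matrix m n A) :
    τ.toFun (x * xᴴ).trace = τ.toFun (xᴴ * x).trace := by
  simp only [trace, diag, mul_apply, conjTranspose_apply, map_sum]
  rw [Finset.sum_comm]
  exact Finset.sum_congr rfl fun _ _ => Finset.sum_congr rfl fun _ _ => τ.tracial' _ _

theorem map_star_mul_eq_zero_of_map_trace_eq_zero (x : Matrix m n A)
    (hx : τ.toFun (xᴴ * x).trace = 0) (j : m) (l : n) : τ.toFun (star (x j l) * x j l) = 0 := by
  simp only [trace, diag, mul_apply, conjTranspose_apply, map_sum] at hx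
  have hnonneg : ∀ l' j', 0 ≤ τ.toFun (star (x j' l') * x j' l') := fun _ _ => τ.nonneg' _
  rw [Finset.sum_eq_zero_iff_of_nonneg fun l' _ => Finset.sum_nonneg fun j' _ => hnonneg l' j']
    at hx
  exact (Finset.sum_eq_zero_iff_of_nonneg fun j' _ => hnonneg l j').mp
    (hx l (Finset.mem_univ _)) j (Finset.mem_univ _)

theorem map_natCast (k : ℕ) : τ.toFun (k : A) = k := by
  rw [← nsmul_one, map_nsmul, τ.map_one', nsmul_one]

end TracialState

theorem Matrix.trace_map_star_mul_conjTranspose {A : Type} [NonUnitalNonAssocSemiring A]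
    [StarRing A] {m n : Type} [Fintype m] [Fintype n] (x : Matrix m n A) :
    (x.map star * (x.map star)ᴴ).trace = (xᴴ * x).trace := by
  simp only [trace, diag, mul_apply, conjTranspose_apply, map_apply, star_star]
  exact Finset.sum_comm

theorem TracialState.map_star_mul_eq_zero_of_fromBlocks {A : Type} [Ring A] [Algebra ℂ A]
    [StarRing A] [StarModule ℂ A] (τ : TracialState A) {n : Type} [Fintype n] [DecidableEq n]
    {a b c d : Matrix n n A} {r : ℂ} (hU : fromBlocks a b c d * (fromBlocks a b c d)ᴴ = 1)
    (hd : d = a.map star) (hb : b = r • c.map star) (hr : ‖r‖ ≠ 1) (j l : n) :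
    τ.toFun (star (c j l) * c j l) = 0 := by
  rw [fromBlocks_conjTranspose, fromBlocks_multiply, ← fromBlocks_one, fromBlocks_inj] at hU
  obtain ⟨hrow₁, -, -, hrow₂⟩ := hU
  set S : Matrix n n A → ℂ := fun x => τ.toFun (xᴴ * x).trace
  have hbb : b * bᴴ = (r * star r) • (c.map star * (c.map star)ᴴ) := by
    rw [hb, conjTranspose_smul, smul_mul_smul_comm, mul_comm]
  have h₁ : S a + (r * star r) * S c = Fintype.card n := by
    simpa only [trace_add, map_add, trace_one, τ.map_natCast, hbb, trace_smul, map_smul,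
      smul_eq_mul, trace_map_star_mul_conjTranspose, τ.map_trace_mul_conjTranspose]
      using congrArg (fun x => τ.toFun x.trace) hrow₁
  have h₂ : S c + S a = Fintype.card n := by
    simpa only [trace_add, map_add, trace_one, τ.map_natCast, hd,
      trace_map_star_mul_conjTranspose, τ.map_trace_mul_conjTranspose]
      using congrArg (fun x => τ.toFun x.trace) hrow₂
  have hr' : r * star r ≠ 1 := by
    rw [Complex.star_def, Complex.mul_conj, Complex.normSq_eq_norm_sq]
    exact_mod_cast (pow_eq_one_iff_of_nonneg (norm_nonneg r) two_ne_zero).not.mpr hr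
  have hSc : S c = 0 := by
    have : (1 - r * star r) * S c = 0 := by linear_combination h₂ - h₁
    exact (mul_eq_zero.mp this).resolve_left (sub_ne_zero.mpr hr'.symm)
  exact τ.map_star_mul_eq_zero_of_map_trace_eq_zero c hSc j l

@[simp] theorem loIdx_val {M : ℕ} (j : Fin M) : (loIdx j : ℕ) = j := rfl

@[simp] theorem hiIdx_val {M : ℕ} (j : Fin M) : (hiIdx j : ℕ) = j + M := rfl

def finTwoMulSumEquiv (M : ℕ) : Fin M ⊕ Fin M ≃ Fin (2 * M) :=
  finSumFinEquiv.trans (finCongr (two_mul M).symm)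

@[simp] theorem finTwoMulSumEquiv_inl {M : ℕ} (j : Fin M) :
    finTwoMulSumEquiv M (.inl j) = loIdx j := rfl

@[simp] theorem finTwoMulSumEquiv_inr {M : ℕ} (j : Fin M) :
    finTwoMulSumEquiv M (.inr j) = hiIdx j :=
  Fin.ext (Nat.add_comm _ _)

theorem Fqe_map_submatrix {A : Type} [Semiring A] [Algebra ℂ A] (M : ℕ) (q ε : ℝ) :
    ((Fqe M q ε).map (algebraMap ℂ A)).submatrix (finTwoMulSumEquiv M) (finTwoMulSumEquiv M) =
      fromBlocks 0 ((q : ℂ) • 1) (((ε * q⁻¹ : ℝ) : ℂ) • 1) 0 := by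
  ext (j | j) (l | l) <;> have := j.isLt <;> have := l.isLt <;>
    simp only [submatrix_apply, finTwoMulSumEquiv_inl, finTwoMulSumEquiv_inr, map_apply, Fqe,
      loIdx_val, hiIdx_val, Nat.add_right_cancel_iff, Complex.ofReal_mul, Complex.ofReal_inv,
      Algebra.algebraMap_eq_smul_one, ite_smul, zero_smul, Matrix.smul_apply,
      one_apply, Fin.ext_iff, smul_ite, smul_zero, fromBlocks_apply₁₁, fromBlocks_apply₁₂,
      fromBlocks_apply₂₁, fromBlocks_apply₂₂, Matrix.zero_apply] <;>
    split_ifs <;> first | rfl | omega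

theorem blocks_of_mul_Fqe_eq {A : Type} [Ring A] [Algebra ℂ A] [StarRing A] [StarModule ℂ A]
    {M : ℕ} {q ε : ℝ} (hq : q ≠ 0) (hε : ε ≠ 0) {u : Matrix (Fin (2 * M)) (Fin (2 * M)) A}
    (hrel : u * (Fqe M q ε).map (algebraMap ℂ A) = (Fqe M q ε).map (algebraMap ℂ A) * u.map star)
    {a b c d : Matrix (Fin M) (Fin M) A}
    (hu : u.submatrix (finTwoMulSumEquiv M) (finTwoMulSumEquiv M) = fromBlocks a b c d) :
    d = a.map star ∧ b = ((q ^ 2 / ε : ℝ) : ℂ) • c.map star := by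
  have hblocks : fromBlocks a b c d * fromBlocks 0 ((q : ℂ) • 1) (((ε * q⁻¹ : ℝ) : ℂ) • 1) 0 =
      fromBlocks 0 ((q : ℂ) • 1) (((ε * q⁻¹ : ℝ) : ℂ) • 1) 0 * (fromBlocks a b c d).map star := by
    rw [← hu, ← Fqe_map_submatrix, ← submatrix_map, submatrix_mul_equiv, submatrix_mul_equiv,
      hrel]
  rw [fromBlocks_map, fromBlocks_multiply, fromBlocks_multiply, fromBlocks_inj] at hblocks
  obtain ⟨hb, ha, -, -⟩ := hblocks
  simp only [mul_zero, zero_mul, zero_add, add_zero, mul_smul_comm, smul_mul_assoc, mul_one,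
    one_mul] at ha hb
  have hq' : (q : ℂ) ≠ 0 := Complex.ofReal_ne_zero.mpr hq
  constructor
  · rw [smul_right_injective _ hq' ha, Matrix.map_map, star_involutive.comp_self, Matrix.map_id]
  · have hs : ((ε * q⁻¹ : ℝ) : ℂ) ≠ 0 := by exact_mod_cast mul_ne_zero hε (inv_ne_zero hq)
    rw [← inv_smul_smul₀ hs b, hb, smul_smul]
    congr 1
    push_cast
    field_simp

theorem OrthRel.map_star_mul_lowerLeft_eq_zero {A : Type} [Ring A] [Algebra ℂ A] [StarRing A]
    [StarModule ℂ A] {M : ℕ} {q ε : ℝ} (hq : q ≠ 0) (hε : ε ≠ 0) (hqε : q ^ 2 ≠ |ε|)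
    {u : Matrix (Fin (2 * M)) (Fin (2 * M)) A} (h : OrthRel (Fqe M q ε) u)
    (τ : TracialState A) (j l : Fin M) :
    τ.toFun (star (u (hiIdx j) (loIdx l)) * u (hiIdx j) (loIdx l)) = 0 := by
  obtain ⟨hunitary, -, hrel⟩ := h
  set U := u.submatrix (finTwoMulSumEquiv M) (finTwoMulSumEquiv M)
  have hU : U = fromBlocks U.toBlocks₁₁ U.toBlocks₁₂ U.toBlocks₂₁ U.toBlocks₂₂ :=
    (fromBlocks_toBlocks U).symm
  obtain ⟨hd, hb⟩ := blocks_of_mul_Fqe_eq hq hε hrel hU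
  have hUU : U * Uᴴ = 1 := by
    rw [conjTranspose_submatrix, submatrix_mul_equiv, hunitary, submatrix_one_equiv]
  have hr : ‖((q ^ 2 / ε : ℝ) : ℂ)‖ ≠ 1 := by
    rw [Complex.norm_real, Real.norm_eq_abs, abs_div, abs_sq]
    exact div_ne_one_of_ne hqε
  rw [hU] at hUU
  simpa [U, toBlocks₂₁] using τ.map_star_mul_eq_zero_of_fromBlocks hUU hd hb hr j l

theorem polO_one_block_lower_left_in_kac_general (M : ℕ) (q ε : ℝ)
    (hq0 : 0 < q) (hq1 : q < 1) (hε : ε = 1 ∨ ε = -1) (P : PolO (Fqe M q ε)) :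
    (∀ (τ : TracialState P.carrier) (j l : Fin M),
        τ.toFun (star (P.u (hiIdx j) (loIdx l)) * P.u (hiIdx j) (loIdx l)) = 0) ∧
      ∀ j k : Fin (2 * M), M ≤ (j : ℕ) → (k : ℕ) < M → P.u j k ∈ kacIdeal P.carrier := by
  have hε0 : ε ≠ 0 := by rcases hε with rfl | rfl <;> norm_num
  have hqε : q ^ 2 ≠ |ε| := by
    rw [show |ε| = 1 by rcases hε with rfl | rfl <;> norm_num]
    exact (pow_lt_one₀ hq0.le hq1 two_ne_zero).ne
  have hlower := P.rel.map_star_mul_lowerLeft_eq_zero hq0.ne' hε0 hqε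
  refine ⟨hlower, fun j k hj hk τ => ?_⟩
  obtain ⟨j', rfl⟩ : ∃ j', hiIdx j' = j :=
    ⟨⟨j - M, by omega⟩, Fin.ext (by simp only [hiIdx_val]; omega)⟩
  exact hlower τ j' ⟨k, hk⟩

/-- in `Pol(O_F⁺)` for `F = [[0, q·I_M], [ε·q⁻¹·I_M, 0]]`, every tracial state
kills `u_{j+M,ℓ}^* u_{j+M,ℓ}` (`1 ≤ j,ℓ ≤ M`); in particular every generator `u_{jk}` with
`M+1 ≤ j ≤ 2M`, `1 ≤ k ≤ M` lies in the Kac ideal. -/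
theorem polO_one_block_lower_left_in_kac (M : ℕ) (hM : 1 ≤ M) (q ε : ℝ)
    (hq0 : 0 < q) (hq1 : q < 1) (hε : ε = 1 ∨ ε = -1) (P : PolO (Fqe M q ε)) :
    (∀ (τ : TracialState P.carrier) (j l : Fin M),
        τ.toFun (star (P.u (hiIdx j) (loIdx l)) * P.u (hiIdx j) (loIdx l)) = 0) ∧
      ∀ j k : Fin (2 * M), M ≤ (j : ℕ) → (k : ℕ) < M → P.u j k ∈ kacIdeal P.carrier :=
  polO_one_block_lower_left_in_kac_general M q ε hq0 hq1 hε P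
end

section
/- Let M ≥ 1, q ∈ (0,1), ε ∈ {−1,1}, and F = [[0, q·I_M], [ε·q^{-1}·I_M, 0]] ∈ M_{2M}(ℂ). The quotient of Pol(O_F^+) by the two-sided *-ideal generated by {u_{jk} : M+1 ≤ j ≤ 2M, 1 ≤ k ≤ M} is *-isomorphic to Pol(U_M^+), via a unital *-algebra isomorphism sending the class of u_{jk} to the generator u_{jk} of Pol(U_M^+) for 1 ≤ j,k ≤ M. -/
/-! Write `U = [[a, b], [C, d]]` in `M × M` blocks and `c = ε q⁻¹`. The relation
`U F = F Ū` contains `c b = q C̄` and `d = ā`, so killing the lower-left block `C` also kills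
`b` and leaves `U = [[a, 0], [0, ā]]`, which satisfies the relations exactly when `a` is
biunitary. Hence `u ↦ [[v, 0], [0, v̄]]` defines a surjection `Pol(O_F⁺) → Pol(U_M⁺)` killing
the ideal, and the quotient map by the ideal factors through it, so its kernel is the ideal. -/

open scoped ComplexOrder

open Matrix

section StarIdeal

variable {A : Type} [Ring A] [StarRing A]

theorem isStarIdeal_sInter {𝒯 : Set (Set A)} (h𝒯 : ∀ T ∈ 𝒯, IsStarIdeal T) :
    IsStarIdeal (⋂₀ 𝒯) := by
  refine ⟨fun T hT => (h𝒯 T hT).1, fun a b ha hb T hT => (h𝒯 T hT).2.1 a b (ha T hT) (hb T hT),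
    fun x a ha => ⟨fun T hT => ((h𝒯 T hT).2.2.1 x a (ha T hT)).1,
      fun T hT => ((h𝒯 T hT).2.2.1 x a (ha T hT)).2⟩,
    fun a ha T hT => (h𝒯 T hT).2.2.2 a (ha T hT)⟩

theorem isStarIdeal_starIdealSpan (S : Set A) : IsStarIdeal (starIdealSpan S) :=
  isStarIdeal_sInter fun _ hT => hT.1

theorem subset_starIdealSpan (S : Set A) : S ⊆ starIdealSpan S :=
  fun _ ha _ hT => hT.2 ha

theorem starIdealSpan_subset {S T : Set A} (hT : IsStarIdeal T) (hST : S ⊆ T) :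
    starIdealSpan S ⊆ T :=
  Set.sInter_subset_of_mem ⟨hT, hST⟩

theorem isStarIdeal_ker {R B : Type} [CommSemiring R] [Algebra R A]
    [Ring B] [Algebra R B] [StarRing B] (f : A →⋆ₐ[R] B) : IsStarIdeal {a | f a = 0} :=
  ⟨map_zero f, fun a b ha hb => by simp_all, fun x a ha => by simp_all,
    fun a ha => by simp_all [map_star]⟩

namespace IsStarIdeal

variable {T : Set A} (hT : IsStarIdeal T)

def toTwoSidedIdeal : TwoSidedIdeal A :=
  .mk' T hT.1 (hT.2.1 _ _) (fun h => by simpa using (hT.2.2.1 (-1) _ h).1)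
    (fun h => (hT.2.2.1 _ _ h).1) (fun h => (hT.2.2.1 _ _ h).2)

abbrev Quotient : Type := hT.toTwoSidedIdeal.ringCon.Quotient

theorem mk_eq_mk_iff (a b : A) : (a : hT.Quotient) = b ↔ a - b ∈ T :=
  (RingCon.eq _).trans ((hT.toTwoSidedIdeal.rel_iff a b).trans (TwoSidedIdeal.mem_mk' ..))

instance : StarRing hT.Quotient where
  star := Quotient.map' star fun a b h => (RingCon.eq _).1 <| (hT.mk_eq_mk_iff _ _).2 <| by
    simpa only [star_sub] using hT.2.2.2 _ ((hT.mk_eq_mk_iff a b).1 (Quotient.sound' h))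
  star_involutive := Quotient.ind' fun a => congrArg _ (star_star a)
  star_mul := Quotient.ind₂' fun a b => congrArg _ (star_mul a b)
  star_add := Quotient.ind₂' fun a b => congrArg _ (star_add a b)

instance {R : Type} [CommSemiring R] [StarRing R] [Algebra R A] [StarModule R A] :
    StarModule R hT.Quotient where
  star_smul r := Quotient.ind' fun a => congrArg _ (star_smul r a)

variable {R : Type} [CommSemiring R] [Algebra R A]

def mkStarAlgHom : A →⋆ₐ[R] hT.Quotient :=
  { RingCon.mkₐ R hT.toTwoSidedIdeal.ringCon with map_star' := fun _ => rfl }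

theorem mkStarAlgHom_eq_zero_iff (a : A) : hT.mkStarAlgHom (R := R) a = 0 ↔ a ∈ T :=
  (hT.mk_eq_mk_iff a 0).trans (by rw [sub_zero])

end IsStarIdeal

end StarIdeal

section MatrixMap

variable {ι : Type} {A B : Type} [Ring A] [Algebra ℂ A] [StarRing A]
  [Ring B] [Algebra ℂ B] [StarRing B] (f : A →⋆ₐ[ℂ] B)

theorem map_map_star (m : Matrix ι ι A) : (m.map star).map f = (m.map f).map star := by
  simp only [Matrix.map_map, Function.comp_def, map_star]

variable [Fintype ι]

theorem map_mul_map (m n : Matrix ι ι A) : (m * n).map f = m.map f * n.map f :=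
  Matrix.map_mul (f := (f : A →+* B))

theorem map_mul_conjTranspose_map (m : Matrix ι ι A) :
    (m * mᴴ).map f = m.map f * (m.map f)ᴴ := by
  rw [map_mul_map, conjTranspose_map f (map_star f)]

theorem map_conjTranspose_mul_map (m : Matrix ι ι A) :
    (mᴴ * m).map f = (m.map f)ᴴ * m.map f := by
  rw [map_mul_map, conjTranspose_map f (map_star f)]

variable [DecidableEq ι]

theorem OrthRel.map {F : Matrix ι ι ℂ} {u : Matrix ι ι A} (h : OrthRel F u) :
    OrthRel F (u.map f) := by
  obtain ⟨h1, h2, h3⟩ := h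
  have hF : (F.map (algebraMap ℂ A)).map f = F.map (algebraMap ℂ B) := by
    simp only [Matrix.map_map, Function.comp_def, AlgHomClass.commutes]
  refine ⟨?_, ?_, ?_⟩
  · rw [← map_mul_conjTranspose_map, h1, Matrix.map_one _ (map_zero f) (map_one f)]
  · rw [← map_conjTranspose_mul_map, h2, Matrix.map_one _ (map_zero f) (map_one f)]
  · rw [← hF, ← map_map_star, ← map_mul_map, ← map_mul_map, h3]

theorem BiUnitary.map {u : Matrix ι ι A} (h : BiUnitary u) : BiUnitary (u.map f) := by
  obtain ⟨h1, h2, h3, h4⟩ := h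
  simp only [BiUnitary, ← map_map_star, ← map_mul_conjTranspose_map,
    ← map_conjTranspose_mul_map, h1, h2, h3, h4, Matrix.map_one _ (map_zero f) (map_one f),
    and_self]

theorem BiUnitary.of_map {u : Matrix ι ι A} (hf : Function.Injective f)
    (h : BiUnitary (u.map f)) : BiUnitary u := by
  have hinj : ∀ m : Matrix ι ι A, m.map f = 1 → m = 1 := fun m hm =>
    Matrix.map_injective hf (hm.trans (Matrix.map_one _ (map_zero f) (map_one f)).symm)
  obtain ⟨h1, h2, h3, h4⟩ := h
  rw [← map_map_star] at h3 h4
  rw [← map_mul_conjTranspose_map] at h1 h3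
  rw [← map_conjTranspose_mul_map] at h2 h4
  exact ⟨hinj _ h1, hinj _ h2, hinj _ h3, hinj _ h4⟩

end MatrixMap

theorem orthRel_reindex_iff {ι κ : Type} [Fintype ι] [DecidableEq ι] [Fintype κ] [DecidableEq κ]
    {A : Type} [Ring A] [Algebra ℂ A] [StarRing A] (e : ι ≃ κ) (F : Matrix ι ι ℂ)
    (u : Matrix ι ι A) : OrthRel (reindex e e F) (reindex e e u) ↔ OrthRel F u := by
  have hmul : ∀ m n : Matrix ι ι A, reindex e e m * reindex e e n = reindex e e (m * n) :=
    fun m n => (map_mul (reindexAlgEquiv ℂ A e) m n).symm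
  have hone : (1 : Matrix κ κ A) = reindex e e 1 := (map_one (reindexAlgEquiv ℂ A e)).symm
  have hF : (reindex e e F).map (algebraMap ℂ A) = reindex e e (F.map (algebraMap ℂ A)) := rfl
  have hu : (reindex e e u).map star = reindex e e (u.map star) := rfl
  simp only [OrthRel, conjTranspose_reindex, hF, hu, hmul, hone, (reindex e e).apply_eq_iff_eq]

section Universal

variable {ι : Type} [Fintype ι] [DecidableEq ι] {B : Type} [Ring B] [Algebra ℂ B] [StarRing B]
  [StarModule ℂ B]

theorem PolO.hom_ext {F : Matrix ι ι ℂ} (P : PolO F) {f g : P.carrier →⋆ₐ[ℂ] B}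
    (h : ∀ j k, f (P.u j k) = g (P.u j k)) : f = g :=
  (P.universal B (P.u.map g) (P.rel.map g)).unique h fun _ _ => rfl

theorem PolU.hom_ext (U : PolU ι) {f g : U.carrier →⋆ₐ[ℂ] B}
    (h : ∀ j k, f (U.u j k) = g (U.u j k)) : f = g :=
  (U.universal B (U.u.map g) (U.rel.map g)).unique h fun _ _ => rfl

/-- Universality forces the star subalgebra generated by the `u j k` to be everything. -/
theorem PolU.surjective_of_forall_mem_range (U : PolU ι) {A : Type} [Ring A] [Algebra ℂ A]
    [StarRing A] (f : A →⋆ₐ[ℂ] U.carrier) (h : ∀ j k, U.u j k ∈ Set.range f) :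
    Function.Surjective f := by
  let w : Matrix ι ι f.range := fun j k => ⟨U.u j k, h j k⟩
  obtain ⟨ψ, hψ, -⟩ := U.universal f.range w (U.rel.of_map f.range.subtype Subtype.val_injective)
  have hid : f.range.subtype.comp ψ = StarAlgHom.id ℂ U.carrier :=
    U.hom_ext fun j k => congrArg Subtype.val (hψ j k)
  intro x
  exact (ψ x).2.imp fun a ha => ha.trans (congrArg (· x) hid)

end Universal

section Blocks

variable {ι : Type} [DecidableEq ι] {A : Type} [Ring A] [Algebra ℂ A]

theorem antidiag_map_algebraMap (q c : ℂ) :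
    (fromBlocks 0 (q • 1) (c • 1) 0 : Matrix (ι ⊕ ι) (ι ⊕ ι) ℂ).map (algebraMap ℂ A) =
      fromBlocks 0 (q • 1) (c • 1) 0 := by
  have h : ∀ z : ℂ, (z • 1 : Matrix ι ι ℂ).map (algebraMap ℂ A) = z • 1 := fun z => by
    ext j k
    rw [map_apply, Matrix.smul_apply, Matrix.smul_apply, one_apply, one_apply]
    split_ifs <;> simp [Algebra.smul_def]
  rw [fromBlocks_map, h, h, Matrix.map_zero _ (map_zero _)]

variable [Fintype ι] [StarRing A]

theorem orthRel_antidiag_conjDiag_iff (q c : ℂ) (w : Matrix ι ι A) :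
    OrthRel (fromBlocks 0 (q • 1) (c • 1) 0) (fromBlocks w 0 0 (w.map star)) ↔ BiUnitary w := by
  have hstar : (fromBlocks w 0 0 (w.map star)).map star = fromBlocks (w.map star) 0 0 w := by
    simp [fromBlocks_map, Matrix.map_map, Function.comp_def]
  simp only [OrthRel, BiUnitary, antidiag_map_algebraMap, hstar, fromBlocks_conjTranspose,
    fromBlocks_multiply, ← fromBlocks_one, Matrix.mul_zero, Matrix.zero_mul, add_zero, zero_add,
    conjTranspose_zero, Matrix.mul_smul, Matrix.smul_mul, Matrix.mul_one, Matrix.one_mul,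
    fromBlocks_inj, smul_zero, and_true, true_and]
  tauto

theorem eq_conjDiag_of_orthRel_antidiag {q c : ℂ} (hc : c ≠ 0) {a b d : Matrix ι ι A}
    (h : OrthRel (fromBlocks 0 (q • 1) (c • 1) 0) (fromBlocks a b 0 d)) :
    fromBlocks a b 0 d = fromBlocks a 0 0 (a.map star) := by
  -- blocks (1,1) and (2,1) of `U F = F Ū` read `c • b = q • 0̄` and `c • d = c • ā`
  have h3 := h.2.2
  rw [antidiag_map_algebraMap, fromBlocks_map, Matrix.map_zero _ (star_zero _)] at h3
  simp only [fromBlocks_multiply, Matrix.mul_zero, Matrix.zero_mul, add_zero, zero_add,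
    Matrix.mul_smul, Matrix.smul_mul, Matrix.mul_one, Matrix.one_mul, fromBlocks_inj] at h3
  obtain ⟨hb, -, hd, -⟩ := h3
  rw [smul_eq_zero_iff_right hc] at hb
  rw [hb, smul_right_injective _ hc hd]

end Blocks

section OneBlock

variable {M : ℕ}

def blockEquiv (M : ℕ) : Fin M ⊕ Fin M ≃ Fin (2 * M) :=
  finSumFinEquiv.trans (finCongr (two_mul M).symm)

theorem blockEquiv_inl (j : Fin M) : blockEquiv M (Sum.inl j) = loIdx j := rfl

theorem blockEquiv_inr (j : Fin M) : blockEquiv M (Sum.inr j) = hiIdx j :=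
  Fin.ext (Nat.add_comm _ _)

theorem Fqe_eq_reindex (M : ℕ) (q ε : ℝ) :
    Fqe M q ε = reindex (blockEquiv M) (blockEquiv M)
      (fromBlocks 0 ((q : ℂ) • 1) (((ε * q⁻¹ : ℝ) : ℂ) • 1) 0) := by
  ext j k
  obtain ⟨j | j, rfl⟩ := (blockEquiv M).surjective j <;>
  obtain ⟨k | k, rfl⟩ := (blockEquiv M).surjective k <;>
  simp only [reindex_apply, submatrix_apply, Equiv.symm_apply_apply] <;>
  simp only [Fqe, blockEquiv_inl, blockEquiv_inr, loIdx, hiIdx, Nat.add_right_cancel_iff,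
    Complex.ofReal_mul, Complex.ofReal_inv, Complex.coe_smul, fromBlocks_apply₁₁,
    fromBlocks_apply₁₂, fromBlocks_apply₂₁, fromBlocks_apply₂₂, Matrix.zero_apply,
    Matrix.smul_apply, one_apply, smul_ite, Complex.real_smul, smul_eq_mul, mul_ite, mul_one,
    mul_zero, smul_zero] <;>
  split_ifs <;> first | rfl | omega

variable {A : Type} [Ring A] [StarRing A]

def conjBlockDiag (w : Matrix (Fin M) (Fin M) A) : Matrix (Fin (2 * M)) (Fin (2 * M)) A :=
  reindex (blockEquiv M) (blockEquiv M) (fromBlocks w 0 0 (w.map star))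

theorem conjBlockDiag_loIdx_loIdx (w : Matrix (Fin M) (Fin M) A) (j k : Fin M) :
    conjBlockDiag w (loIdx j) (loIdx k) = w j k := by
  simp [conjBlockDiag, ← blockEquiv_inl]

theorem conjBlockDiag_apply_eq_zero (w : Matrix (Fin M) (Fin M) A) {j k : Fin (2 * M)}
    (hj : M ≤ j) (hk : k < M) : conjBlockDiag w j k = 0 := by
  obtain ⟨j | j, rfl⟩ := (blockEquiv M).surjective j
  · simp only [blockEquiv_inl, loIdx] at hj; omega
  obtain ⟨k | k, rfl⟩ := (blockEquiv M).surjective k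
  · simp [conjBlockDiag]
  · simp [blockEquiv_inr, hiIdx] at hk

variable [Algebra ℂ A]

theorem conjBlockDiag_map {B : Type} [Ring B] [Algebra ℂ B] [StarRing B] (f : A →⋆ₐ[ℂ] B)
    (w : Matrix (Fin M) (Fin M) A) : (conjBlockDiag w).map f = conjBlockDiag (w.map f) := by
  simp only [conjBlockDiag, reindex_apply, ← submatrix_map, fromBlocks_map, map_map_star,
    Matrix.map_zero _ (map_zero f)]

theorem orthRel_Fqe_conjBlockDiag_iff (q ε : ℝ) (w : Matrix (Fin M) (Fin M) A) :
    OrthRel (Fqe M q ε) (conjBlockDiag w) ↔ BiUnitary w := by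
  rw [Fqe_eq_reindex, conjBlockDiag, orthRel_reindex_iff, orthRel_antidiag_conjDiag_iff]

theorem eq_conjBlockDiag_of_orthRel_Fqe {q ε : ℝ} (hq : q ≠ 0) (hε : ε ≠ 0)
    {u : Matrix (Fin (2 * M)) (Fin (2 * M)) A} (hu : OrthRel (Fqe M q ε) u)
    (h : ∀ j k, u (hiIdx j) (loIdx k) = 0) : u = conjBlockDiag (u.submatrix loIdx loIdx) := by
  set e := blockEquiv M
  set U := reindex e.symm e.symm u
  have hU : U = fromBlocks (u.submatrix loIdx loIdx) U.toBlocks₁₂ 0 U.toBlocks₂₂ := by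
    conv_lhs => rw [← fromBlocks_toBlocks U]
    congr 1
    ext j k
    simpa only [U, e, toBlocks₂₁, of_apply, reindex_apply, submatrix_apply, Equiv.symm_symm,
      blockEquiv_inl, blockEquiv_inr, Matrix.zero_apply] using h j k
  have hu' : u = reindex e e U := by simp [U]
  have hUrel : OrthRel (fromBlocks 0 ((q : ℂ) • 1) (((ε * q⁻¹ : ℝ) : ℂ) • 1) 0) U := by
    rwa [← orthRel_reindex_iff e, ← Fqe_eq_reindex, ← hu']
  have hc : ((ε * q⁻¹ : ℝ) : ℂ) ≠ 0 := by simp [hq, hε]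
  rw [hU] at hUrel hu'
  rwa [eq_conjDiag_of_orthRel_antidiag hc hUrel] at hu'

end OneBlock

theorem ker_subset_starIdealSpan_lowerLeft {M : ℕ} {q ε : ℝ} (hq : q ≠ 0) (hε : ε ≠ 0)
    (P : PolO (Fqe M q ε)) (B : PolU (Fin M)) {φ : P.carrier →⋆ₐ[ℂ] B.carrier}
    (hφ : P.u.map φ = conjBlockDiag B.u) :
    {a | φ a = 0} ⊆
      starIdealSpan {x | ∃ j k : Fin (2 * M), M ≤ (j : ℕ) ∧ (k : ℕ) < M ∧ x = P.u j k} := by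
  set S := {x | ∃ j k : Fin (2 * M), M ≤ (j : ℕ) ∧ (k : ℕ) < M ∧ x = P.u j k}
  intro a ha
  have hI := isStarIdeal_starIdealSpan S
  let π : P.carrier →⋆ₐ[ℂ] hI.Quotient := hI.mkStarAlgHom
  have hπu : P.u.map π = conjBlockDiag ((P.u.map π).submatrix loIdx loIdx) :=
    eq_conjBlockDiag_of_orthRel_Fqe hq hε (P.rel.map π) fun j k =>
      (hI.mkStarAlgHom_eq_zero_iff (R := ℂ) _).2 <|
        subset_starIdealSpan S ⟨hiIdx j, loIdx k, by simp [hiIdx], by simp [loIdx], rfl⟩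
  obtain ⟨ψ, hψ, -⟩ := B.universal _ _
    ((orthRel_Fqe_conjBlockDiag_iff q ε _).1 (hπu ▸ P.rel.map π))
  have hψφ : ψ.comp φ = π := by
    have h : (P.u.map φ).map ψ = P.u.map π := by
      rw [hφ, conjBlockDiag_map, show B.u.map ψ = _ from Matrix.ext hψ, ← hπu]
    exact P.hom_ext fun j k => congrArg (· j k) h
  have hπa : π a = 0 := by rw [← hψφ, StarAlgHom.comp_apply, show φ a = 0 from ha, map_zero]
  exact (hI.mkStarAlgHom_eq_zero_iff a).1 hπa

/-- The quotient `Pol(O_F⁺)/I ≅ Pol(U_M⁺)` is expressed as a surjective *-homomorphism with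
kernel `I`. -/
theorem polO_one_block_quotient_is_polU_general (M : ℕ) (q ε : ℝ)
    (hq0 : 0 < q) (hε : ε = 1 ∨ ε = -1) (P : PolO (Fqe M q ε))
    (B : PolU (Fin M)) :
    ∃ φ : P.carrier →⋆ₐ[ℂ] B.carrier,
      Function.Surjective φ ∧
      (∀ j k : Fin M, φ (P.u (loIdx j) (loIdx k)) = B.u j k) ∧
      {a : P.carrier | φ a = 0} =
        starIdealSpan
          {x : P.carrier | ∃ j k : Fin (2 * M), M ≤ (j : ℕ) ∧ (k : ℕ) < M ∧ x = P.u j k} := by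
  obtain ⟨φ, hφ, -⟩ := P.universal B.carrier (conjBlockDiag B.u)
    ((orthRel_Fqe_conjBlockDiag_iff q ε B.u).2 B.rel)
  have hφlo (j k : Fin M) : φ (P.u (loIdx j) (loIdx k)) = B.u j k :=
    (hφ _ _).trans (conjBlockDiag_loIdx_loIdx B.u j k)
  have hε0 : ε ≠ 0 := by rcases hε with rfl | rfl <;> norm_num
  refine ⟨φ, B.surjective_of_forall_mem_range φ fun j k => ⟨_, hφlo j k⟩, hφlo,
    (ker_subset_starIdealSpan_lowerLeft hq0.ne' hε0 P B (Matrix.ext hφ)).antisymm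
      (starIdealSpan_subset (isStarIdeal_ker φ) ?_)⟩
  rintro _ ⟨j, k, hj, hk, rfl⟩
  exact (hφ j k).trans (conjBlockDiag_apply_eq_zero B.u hj hk)

/-- the quotient of `Pol(O_F⁺)` (with `F = [[0, q·I_M], [ε·q⁻¹·I_M, 0]]`) by the
two-sided *-ideal generated by `{u_{jk} : M+1 ≤ j ≤ 2M, 1 ≤ k ≤ M}` is *-isomorphic to
`Pol(U_M⁺)`, the class of `u_{jk}` (`1 ≤ j,k ≤ M`) corresponding to the generator of
`Pol(U_M⁺)`.  This is expressed by a surjective unital *-homomorphism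
`φ : Pol(O_F⁺) → Pol(U_M⁺)` whose kernel is exactly that ideal. -/
theorem polO_one_block_quotient_is_polU (M : ℕ) (hM : 1 ≤ M) (q ε : ℝ)
    (hq0 : 0 < q) (hq1 : q < 1) (hε : ε = 1 ∨ ε = -1) (P : PolO (Fqe M q ε))
    (B : PolU (Fin M)) :
    ∃ φ : P.carrier →⋆ₐ[ℂ] B.carrier,
      Function.Surjective φ ∧
      (∀ j k : Fin M, φ (P.u (loIdx j) (loIdx k)) = B.u j k) ∧
      {a : P.carrier | φ a = 0} =
        starIdealSpan
          {x : P.carrier | ∃ j k : Fin (2 * M), M ≤ (j : ℕ) ∧ (k : ℕ) < M ∧ x = P.u j k} :=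
  polO_one_block_quotient_is_polU_general M q ε hq0 hε P B
end

section
/- In the Case I setting, for every tracial state τ on Pol(O_F^+) one has Σ_{ρ=1}^{r} (1 + q_ρ²)·τ(Tr(X_ρ^*·X_ρ)) = Σ_{ρ=1}^{r} (1 + q_ρ^{−2})·τ(Tr(R_ρ^*·R_ρ)), where Tr denotes the sum of diagonal entries and τ is applied entrywise. -/
open scoped ComplexOrder

/-- The index set in the Case I setting: for each `ν = 1,…,r` a block `P_ν ⊕ Q_ν` of size
`2M_ν`, followed by a set `T` of size `s = N − 2K`. -/
abbrev CaseIIdx (r : ℕ) (M : Fin r → ℕ) (s : ℕ) : Type :=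
  (Σ ν : Fin r, (Fin (M ν) ⊕ Fin (M ν))) ⊕ Fin s

/-- The Case I matrix `F`: block-diagonal with blocks `[[0, q_ν·I_{M_ν}], [q_ν⁻¹·I_{M_ν}, 0]]`
for `ν = 1,…,r`, followed by the identity `I_{N−2K}`. -/
noncomputable def FCaseI (r : ℕ) (q : Fin r → ℝ) (M : Fin r → ℕ) (s : ℕ) :
    Matrix (CaseIIdx r M s) (CaseIIdx r M s) ℂ := fun a b =>
  match a, b with
  | .inl ⟨ν, .inl j⟩, .inl ⟨μ, .inr k⟩ =>
      if ν = μ ∧ (j : ℕ) = (k : ℕ) then ((q ν : ℝ) : ℂ) else 0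
  | .inl ⟨ν, .inr j⟩, .inl ⟨μ, .inl k⟩ =>
      if ν = μ ∧ (j : ℕ) = (k : ℕ) then (((q ν)⁻¹ : ℝ) : ℂ) else 0
  | .inr p, .inr t => if p = t then 1 else 0
  | _, _ => 0


section CaseIAux

lemma caseI_inl_ne_inr {r : ℕ} {M : Fin r → ℕ} {s : ℕ} {ν μ : Fin r}
    (j : Fin (M ν)) (k : Fin (M μ)) :
    (Sum.inl ⟨ν, Sum.inl j⟩ : CaseIIdx r M s) ≠ Sum.inl ⟨μ, Sum.inr k⟩ := by
  intro hh
  obtain ⟨h5, h6⟩ := Sigma.mk.inj_iff.mp (Sum.inl.inj hh)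
  subst h5
  exact absurd (eq_of_heq h6) (by simp)

lemma caseI_inr_ne_inr {r : ℕ} {M : Fin r → ℕ} {s : ℕ} {μ : Fin r} {j k : Fin (M μ)}
    (h2 : j ≠ k) :
    (Sum.inl ⟨μ, Sum.inr j⟩ : CaseIIdx r M s) ≠ Sum.inl ⟨μ, Sum.inr k⟩ := by
  intro hh
  obtain ⟨h5, h6⟩ := Sigma.mk.inj_iff.mp (Sum.inl.inj hh)
  exact h2 (Sum.inr.inj (eq_of_heq h6))

lemma FCaseI_colP {r : ℕ} (q : Fin r → ℝ) (M : Fin r → ℕ) {s : ℕ}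
    (c : CaseIIdx r M s) (μ : Fin r) (k : Fin (M μ)) :
    FCaseI r q M s c (.inl ⟨μ, .inl k⟩) =
      if c = .inl ⟨μ, .inr k⟩ then (((q μ)⁻¹ : ℝ) : ℂ) else 0 := by
  rcases c with (⟨ν, j | j⟩ | t)
  · simp only [FCaseI]
    rw [if_neg (caseI_inl_ne_inr (M := M) j k)]
  · by_cases h : ν = μ
    · subst h
      by_cases h2 : j = k
      · subst h2; simp [FCaseI]
      · have h3 : ¬ ((j : ℕ) = (k : ℕ)) := fun hh => h2 (Fin.ext hh)
        simp [FCaseI, h3, caseI_inr_ne_inr (M := M) h2]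
    · have h4 : (Sum.inl ⟨ν, Sum.inr j⟩ : CaseIIdx r M s) ≠ Sum.inl ⟨μ, Sum.inr k⟩ := by
        intro hh
        obtain ⟨h5, -⟩ := Sigma.mk.inj_iff.mp (Sum.inl.inj hh)
        exact h h5
      simp [FCaseI, h, h4]
  · simp [FCaseI]

lemma FCaseI_rowP {r : ℕ} (q : Fin r → ℝ) (M : Fin r → ℕ) {s : ℕ}
    (c : CaseIIdx r M s) (ν : Fin r) (j : Fin (M ν)) :
    FCaseI r q M s (.inl ⟨ν, .inl j⟩) c =
      if c = .inl ⟨ν, .inr j⟩ then ((q ν : ℝ) : ℂ) else 0 := by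
  rcases c with (⟨μ, k | k⟩ | t)
  · simp only [FCaseI]
    rw [if_neg (caseI_inl_ne_inr (M := M) k j)]
  · by_cases h : ν = μ
    · subst h
      by_cases h2 : j = k
      · subst h2; simp [FCaseI]
      · have h3 : ¬ ((j : ℕ) = (k : ℕ)) := fun hh => h2 (Fin.ext hh)
        have h2' : k ≠ j := fun hh => h2 hh.symm
        simp [FCaseI, h3, caseI_inr_ne_inr (M := M) h2']
    · have h4 : (Sum.inl ⟨μ, Sum.inr k⟩ : CaseIIdx r M s) ≠ Sum.inl ⟨ν, Sum.inr j⟩ := by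
        intro hh
        obtain ⟨h5, -⟩ := Sigma.mk.inj_iff.mp (Sum.inl.inj hh)
        exact h h5.symm
      simp [FCaseI, h, h4]
  · simp [FCaseI]

lemma FCaseI_colT {r : ℕ} (q : Fin r → ℝ) (M : Fin r → ℕ) {s : ℕ}
    (c : CaseIIdx r M s) (t : Fin s) :
    FCaseI r q M s c (.inr t) = if c = .inr t then 1 else 0 := by
  rcases c with (⟨ν, j | j⟩ | p) <;> simp [FCaseI]

lemma FCaseI_rowT {r : ℕ} (q : Fin r → ℝ) (M : Fin r → ℕ) {s : ℕ}
    (c : CaseIIdx r M s) (t : Fin s) :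
    FCaseI r q M s (.inr t) c = if c = .inr t then 1 else 0 := by
  rcases c with (⟨ν, j | j⟩ | p) <;> simp [FCaseI, eq_comm]

lemma caseI_sum_split {r : ℕ} (M : Fin r → ℕ) {s : ℕ} (f : CaseIIdx r M s → ℂ) :
    ∑ a, f a = (∑ ν : Fin r, ((∑ k : Fin (M ν), f (.inl ⟨ν, .inl k⟩)) +
      ∑ k : Fin (M ν), f (.inl ⟨ν, .inr k⟩))) + ∑ t : Fin s, f (.inr t) := by
  rw [Fintype.sum_sum_type]
  congr 1
  rw [← Finset.univ_sigma_univ, Finset.sum_sigma]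
  exact Finset.sum_congr rfl fun ν _ => Fintype.sum_sum_type _

/-- The entrywise quantity `τ(u_{ab}^* u_{ab})`. -/
noncomputable def pEnt {r : ℕ} {q : Fin r → ℝ} {M : Fin r → ℕ} {s : ℕ}
    (P : PolO (FCaseI r q M s)) (τ : TracialState P.carrier)
    (a b : CaseIIdx r M s) : ℂ :=
  τ.toFun (star (P.u a b) * P.u a b)

end CaseIAux

/-- in the Case I setting, for every tracial state `τ` on `Pol(O_F⁺)`,
`Σ_ρ (1+q_ρ²)·τ(Tr(X_ρ^* X_ρ)) = Σ_ρ (1+q_ρ⁻²)·τ(Tr(R_ρ^* R_ρ))`. -/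
theorem caseI_trace_identity (r : ℕ) (hr : 1 ≤ r) (q : Fin r → ℝ) (hq0 : ∀ ν, 0 < q ν)
    (hq1 : ∀ ν, q ν < 1) (hmono : StrictMono q) (M : Fin r → ℕ) (hM : ∀ ν, 1 ≤ M ν)
    (s : ℕ) (P : PolO (FCaseI r q M s)) (τ : TracialState P.carrier) :
    ∑ ρ : Fin r, ((1 + q ρ ^ 2 : ℝ) : ℂ) *
        τ.toFun (∑ k : Fin (M ρ), ∑ t : Fin s,
          star (P.u (.inr t) (.inl ⟨ρ, .inl k⟩)) * P.u (.inr t) (.inl ⟨ρ, .inl k⟩)) =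
      ∑ ρ : Fin r, ((1 + ((q ρ)⁻¹) ^ 2 : ℝ) : ℂ) *
        τ.toFun (∑ t : Fin s, ∑ j : Fin (M ρ),
          star (P.u (.inl ⟨ρ, .inl j⟩) (.inr t)) * P.u (.inl ⟨ρ, .inl j⟩) (.inr t)) := by
  classical
  obtain ⟨hUU, hU'U, hUF⟩ := P.rel
  have hτ1 : τ.toFun 1 = 1 := τ.map_one'
  have hτtr : ∀ a b : P.carrier, τ.toFun (a * b) = τ.toFun (b * a) := τ.tracial'
  have hstar : ∀ x : ℝ, star ((x : ℝ) : ℂ) = ((x : ℝ) : ℂ) := fun x => by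
    simp [Complex.star_def, Complex.conj_ofReal]
  -- entry relation: column version
  have e1 : ∀ (t : Fin s) (μ : Fin r) (k : Fin (M μ)),
      P.u (.inr t) (.inl ⟨μ, .inr k⟩) * algebraMap ℂ P.carrier (((q μ)⁻¹ : ℝ) : ℂ)
        = star (P.u (.inr t) (.inl ⟨μ, .inl k⟩)) := by
    intro t μ k
    have h := congrFun (congrFun hUF (.inr t)) (.inl ⟨μ, .inl k⟩)
    rw [Matrix.mul_apply, Matrix.mul_apply] at h
    simp only [Matrix.map_apply, FCaseI_colP q M, FCaseI_rowT q M,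
      apply_ite (algebraMap ℂ P.carrier), map_zero, map_one, mul_zero, zero_mul,
      mul_ite, ite_mul, mul_one, one_mul, Finset.sum_ite_eq', Finset.mem_univ,
      if_true] at h
    exact h
  have hqc : ∀ μ : Fin r, (((q μ)⁻¹ : ℝ) : ℂ) * ((q μ : ℝ) : ℂ) = 1 := by
    intro μ
    rw [← Complex.ofReal_mul, inv_mul_cancel₀ (hq0 μ).ne', Complex.ofReal_one]
  have e1' : ∀ (t : Fin s) (μ : Fin r) (k : Fin (M μ)),
      P.u (.inr t) (.inl ⟨μ, .inr k⟩)
        = ((q μ : ℝ) : ℂ) • star (P.u (.inr t) (.inl ⟨μ, .inl k⟩)) := by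
    intro t μ k
    calc P.u (.inr t) (.inl ⟨μ, .inr k⟩)
        = P.u (.inr t) (.inl ⟨μ, .inr k⟩) * algebraMap ℂ P.carrier (((q μ)⁻¹ : ℝ) : ℂ)
            * algebraMap ℂ P.carrier ((q μ : ℝ) : ℂ) := by
          rw [mul_assoc, ← map_mul, hqc μ, map_one, mul_one]
      _ = star (P.u (.inr t) (.inl ⟨μ, .inl k⟩)) * algebraMap ℂ P.carrier ((q μ : ℝ) : ℂ) := by
          rw [e1 t μ k]
      _ = _ := by rw [Algebra.smul_def, Algebra.commutes]
  -- entry relation: row version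
  have e2' : ∀ (ν : Fin r) (j : Fin (M ν)) (t : Fin s),
      P.u (.inl ⟨ν, .inl j⟩) (.inr t)
        = ((q ν : ℝ) : ℂ) • star (P.u (.inl ⟨ν, .inr j⟩) (.inr t)) := by
    intro ν j t
    have h := congrFun (congrFun hUF (.inl ⟨ν, .inl j⟩)) (.inr t)
    rw [Matrix.mul_apply, Matrix.mul_apply] at h
    simp only [Matrix.map_apply, FCaseI_colT q M, FCaseI_rowP q M,
      apply_ite (algebraMap ℂ P.carrier), map_zero, map_one, mul_zero, zero_mul,
      mul_ite, ite_mul, mul_one, one_mul, Finset.sum_ite_eq', Finset.mem_univ,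
      if_true] at h
    rw [h, Algebra.smul_def]
  -- τ-level consequences
  have hpc : ∀ (t : Fin s) (ρ : Fin r) (k : Fin (M ρ)),
      pEnt P τ (.inr t) (.inl ⟨ρ, .inr k⟩)
        = ((q ρ : ℝ) : ℂ) ^ 2 * pEnt P τ (.inr t) (.inl ⟨ρ, .inl k⟩) := by
    intro t ρ k
    simp only [pEnt]
    rw [e1' t ρ k, star_smul, star_star, hstar, smul_mul_smul_comm, map_smul,
      smul_eq_mul, hτtr, ← sq]
  have hpr : ∀ (ρ : Fin r) (j : Fin (M ρ)) (t : Fin s),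
      pEnt P τ (.inl ⟨ρ, .inl j⟩) (.inr t)
        = ((q ρ : ℝ) : ℂ) ^ 2 * pEnt P τ (.inl ⟨ρ, .inr j⟩) (.inr t) := by
    intro ρ j t
    simp only [pEnt]
    rw [e2' ρ j t, star_smul, star_star, hstar, smul_mul_smul_comm, map_smul,
      smul_eq_mul, hτtr, ← sq]
  -- row and column sums are 1
  have hcol : ∀ b, ∑ a, pEnt P τ a b = 1 := by
    intro b
    have h := congrFun (congrFun hU'U b) b
    rw [Matrix.mul_apply] at h
    simp only [Matrix.conjTranspose_apply, Matrix.one_apply_eq] at h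
    have h2 : ∑ a, pEnt P τ a b = τ.toFun (∑ a, star (P.u a b) * P.u a b) :=
      (map_sum τ.toFun _ _).symm
    rw [h2, h, hτ1]
  have hrow : ∀ a, ∑ b, pEnt P τ a b = 1 := by
    intro a
    have h := congrFun (congrFun hUU a) a
    rw [Matrix.mul_apply] at h
    simp only [Matrix.conjTranspose_apply, Matrix.one_apply_eq] at h
    have h2 : ∑ b, pEnt P τ a b = τ.toFun (∑ b, P.u a b * star (P.u a b)) := by
      rw [map_sum]
      exact Finset.sum_congr rfl fun b _ => hτtr _ _
    rw [h2, h, hτ1]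
  -- fold the goal into pEnt sums
  have hτL : ∀ ρ : Fin r, τ.toFun (∑ k : Fin (M ρ), ∑ t : Fin s,
        star (P.u (.inr t) (.inl ⟨ρ, .inl k⟩)) * P.u (.inr t) (.inl ⟨ρ, .inl k⟩))
      = ∑ k : Fin (M ρ), ∑ t : Fin s, pEnt P τ (.inr t) (.inl ⟨ρ, .inl k⟩) := by
    intro ρ
    rw [map_sum]
    exact Finset.sum_congr rfl fun k _ => map_sum _ _ _
  have hτR : ∀ ρ : Fin r, τ.toFun (∑ t : Fin s, ∑ j : Fin (M ρ),
        star (P.u (.inl ⟨ρ, .inl j⟩) (.inr t)) * P.u (.inl ⟨ρ, .inl j⟩) (.inr t))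
      = ∑ t : Fin s, ∑ j : Fin (M ρ), pEnt P τ (.inl ⟨ρ, .inl j⟩) (.inr t) := by
    intro ρ
    rw [map_sum]
    exact Finset.sum_congr rfl fun t _ => map_sum _ _ _
  -- per-block coefficient identities
  have hLcoef : ∀ ρ : Fin r, ((1 + q ρ ^ 2 : ℝ) : ℂ) *
        (∑ k : Fin (M ρ), ∑ t : Fin s, pEnt P τ (.inr t) (.inl ⟨ρ, .inl k⟩))
      = (∑ k : Fin (M ρ), ∑ t : Fin s, pEnt P τ (.inr t) (.inl ⟨ρ, .inl k⟩)) +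
        (∑ k : Fin (M ρ), ∑ t : Fin s, pEnt P τ (.inr t) (.inl ⟨ρ, .inr k⟩)) := by
    intro ρ
    have h2 : (∑ k : Fin (M ρ), ∑ t : Fin s, pEnt P τ (.inr t) (.inl ⟨ρ, .inr k⟩))
        = ((q ρ : ℝ) : ℂ) ^ 2 *
          ∑ k : Fin (M ρ), ∑ t : Fin s, pEnt P τ (.inr t) (.inl ⟨ρ, .inl k⟩) := by
      rw [Finset.mul_sum]
      refine Finset.sum_congr rfl fun k _ => ?_
      rw [Finset.mul_sum]
      exact Finset.sum_congr rfl fun t _ => hpc t ρ k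
    rw [h2]
    push_cast
    ring
  have hRcoef : ∀ ρ : Fin r, ((1 + ((q ρ)⁻¹) ^ 2 : ℝ) : ℂ) *
        (∑ t : Fin s, ∑ j : Fin (M ρ), pEnt P τ (.inl ⟨ρ, .inl j⟩) (.inr t))
      = (∑ t : Fin s, ∑ j : Fin (M ρ), pEnt P τ (.inl ⟨ρ, .inl j⟩) (.inr t)) +
        (∑ t : Fin s, ∑ j : Fin (M ρ), pEnt P τ (.inl ⟨ρ, .inr j⟩) (.inr t)) := by
    intro ρ
    have h2 : (∑ t : Fin s, ∑ j : Fin (M ρ), pEnt P τ (.inl ⟨ρ, .inl j⟩) (.inr t))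
        = ((q ρ : ℝ) : ℂ) ^ 2 *
          ∑ t : Fin s, ∑ j : Fin (M ρ), pEnt P τ (.inl ⟨ρ, .inr j⟩) (.inr t) := by
      rw [Finset.mul_sum]
      refine Finset.sum_congr rfl fun t _ => ?_
      rw [Finset.mul_sum]
      exact Finset.sum_congr rfl fun j _ => hpr ρ j t
    have hc : ((q ρ : ℝ) : ℂ) ≠ 0 := by
      exact_mod_cast (hq0 ρ).ne'
    rw [h2]
    push_cast
    field_simp
  -- total mass equations
  have hsum1 : ∑ t : Fin s, ∑ b, pEnt P τ (.inr t) b = (s : ℂ) := by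
    simp [fun t : Fin s => hrow (Sum.inr t : CaseIIdx r M s)]
  have hsum2 : ∑ t : Fin s, ∑ a, pEnt P τ a (.inr t) = (s : ℂ) := by
    simp [fun t : Fin s => hcol (Sum.inr t : CaseIIdx r M s)]
  have h2 : ∑ t : Fin s, ∑ b, pEnt P τ (.inr t) b
      = (∑ ν : Fin r,
          ((∑ k : Fin (M ν), ∑ t : Fin s, pEnt P τ (.inr t) (.inl ⟨ν, .inl k⟩)) +
           ∑ k : Fin (M ν), ∑ t : Fin s, pEnt P τ (.inr t) (.inl ⟨ν, .inr k⟩))) +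
        ∑ t : Fin s, ∑ t' : Fin s, pEnt P τ (.inr t) (.inr t') := by
    rw [Finset.sum_congr rfl fun t _ => caseI_sum_split M (fun b => pEnt P τ (.inr t) b)]
    rw [Finset.sum_add_distrib]
    congr 1
    rw [Finset.sum_comm]
    refine Finset.sum_congr rfl fun ν _ => ?_
    rw [Finset.sum_add_distrib]
    congr 1 <;> rw [Finset.sum_comm]
  have h3 : ∑ t : Fin s, ∑ a, pEnt P τ a (.inr t)
      = (∑ ν : Fin r,
          ((∑ t : Fin s, ∑ j : Fin (M ν), pEnt P τ (.inl ⟨ν, .inl j⟩) (.inr t)) +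
           ∑ t : Fin s, ∑ j : Fin (M ν), pEnt P τ (.inl ⟨ν, .inr j⟩) (.inr t))) +
        ∑ t : Fin s, ∑ t' : Fin s, pEnt P τ (.inr t) (.inr t') := by
    rw [Finset.sum_congr rfl fun t _ => caseI_sum_split M (fun a => pEnt P τ a (.inr t))]
    rw [Finset.sum_add_distrib]
    congr 1
    · rw [Finset.sum_comm]
      refine Finset.sum_congr rfl fun ν _ => ?_
      rw [Finset.sum_add_distrib]
    · rw [Finset.sum_comm]
  have hA : (∑ ν : Fin r,
        ((∑ k : Fin (M ν), ∑ t : Fin s, pEnt P τ (.inr t) (.inl ⟨ν, .inl k⟩)) +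
         ∑ k : Fin (M ν), ∑ t : Fin s, pEnt P τ (.inr t) (.inl ⟨ν, .inr k⟩))) +
      (∑ t : Fin s, ∑ t' : Fin s, pEnt P τ (.inr t) (.inr t')) = (s : ℂ) :=
    h2.symm.trans hsum1
  have hB : (∑ ν : Fin r,
        ((∑ t : Fin s, ∑ j : Fin (M ν), pEnt P τ (.inl ⟨ν, .inl j⟩) (.inr t)) +
         ∑ t : Fin s, ∑ j : Fin (M ν), pEnt P τ (.inl ⟨ν, .inr j⟩) (.inr t))) +
      (∑ t : Fin s, ∑ t' : Fin s, pEnt P τ (.inr t) (.inr t')) = (s : ℂ) :=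
    h3.symm.trans hsum2
  calc ∑ ρ : Fin r, ((1 + q ρ ^ 2 : ℝ) : ℂ) *
        τ.toFun (∑ k : Fin (M ρ), ∑ t : Fin s,
          star (P.u (.inr t) (.inl ⟨ρ, .inl k⟩)) * P.u (.inr t) (.inl ⟨ρ, .inl k⟩))
      = ∑ ν : Fin r,
          ((∑ k : Fin (M ν), ∑ t : Fin s, pEnt P τ (.inr t) (.inl ⟨ν, .inl k⟩)) +
           ∑ k : Fin (M ν), ∑ t : Fin s, pEnt P τ (.inr t) (.inl ⟨ν, .inr k⟩)) :=
        Finset.sum_congr rfl fun ρ _ => by rw [hτL ρ, hLcoef ρ]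
    _ = ∑ ν : Fin r,
          ((∑ t : Fin s, ∑ j : Fin (M ν), pEnt P τ (.inl ⟨ν, .inl j⟩) (.inr t)) +
           ∑ t : Fin s, ∑ j : Fin (M ν), pEnt P τ (.inl ⟨ν, .inr j⟩) (.inr t)) := by
        linear_combination hA - hB
    _ = ∑ ρ : Fin r, ((1 + ((q ρ)⁻¹) ^ 2 : ℝ) : ℂ) *
        τ.toFun (∑ t : Fin s, ∑ j : Fin (M ρ),
          star (P.u (.inl ⟨ρ, .inl j⟩) (.inr t)) * P.u (.inl ⟨ρ, .inl j⟩) (.inr t)) :=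
        (Finset.sum_congr rfl fun ρ _ => by rw [hτR ρ, hRcoef ρ]).symm
end

section
/- In the Case I setting, for every tracial state τ on Pol(O_F^+) and all ρ,μ ∈ {1,…,r} one has τ(Tr(C_{ρμ}^*·C_{ρμ})) = 0. In particular, every entry of every block C_{ρμ} belongs to the Kac ideal J_KAC(Pol(O_F^+)). -/
open scoped ComplexOrder

/-! Let `x a b = τ(u_ab^* u_ab) ≥ 0`. Unitarity of `u` makes `x` doubly stochastic, and the
relation `U F = F Ū` gives `x a b = (w a / w b)^2 x (σ a) (σ b)`, where `σ` swaps `P_ν ↔ Q_ν` and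
the weight `w` is `q_ν`, `q_ν⁻¹`, `1` on `P_ν`, `Q_ν`, `T`. With the sign `e` equal to `1`, `-1`,
`0` on `P`, `Q`, `T`, double stochasticity gives `∑ (e a - e b) x a b = 0`, and the flip turns
this into `∑ (e a - e b) (w b / w a)^2 x a b = 0`. Hence
`∑ (e a - e b) (1 - (w b / w a)^2) x a b = 0`, a sum of nonpositive terms whose coefficient is
negative whenever `e a ≠ e b`, because `w` strictly decreases with `e`. So `x a b = 0` there,
in particular on the blocks `C_{ρμ}` (rows in `Q`, columns in `P`). -/

section FlipScaling

variable {ι : Type*} [Fintype ι]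

lemma sub_mul_one_sub_div_sq_neg {e e' w w' : ℝ} (hw : 0 < w) (hw' : 0 < w')
    (hew : (e - e') * (w - w') < 0) : (e - e') * (1 - (w' / w) ^ 2) < 0 := by
  have hfactor : (e - e') * (1 - (w' / w) ^ 2) = (e - e') * (w - w') * ((w + w') / w ^ 2) := by
    field_simp
    ring
  rw [hfactor]
  exact mul_neg_of_neg_of_pos hew (by positivity)

lemma sum_sum_sub_mul_eq_zero {x : ι → ι → ℝ} (e : ι → ℝ)
    (hsum : ∀ a, ∑ b, x a b = ∑ b, x b a) : ∑ a, ∑ b, (e a - e b) * x a b = 0 := by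
  simp only [sub_mul, Finset.sum_sub_distrib, ← Finset.mul_sum]
  rw [Finset.sum_comm (f := fun a b => e b * x a b)]
  simp only [← Finset.mul_sum, hsum, sub_self]

theorem eq_zero_of_flip_scaling {x : ι → ι → ℝ} {σ : ι → ι} (hσ : σ.Involutive) {e w : ι → ℝ}
    (hw : ∀ a, 0 < w a) (he : ∀ a, e (σ a) = -e a)
    (hew : ∀ a b, e a ≠ e b → (e a - e b) * (w a - w b) < 0) (hx : ∀ a b, 0 ≤ x a b)
    (hflip : ∀ a b, x a b = (w a / w b) ^ 2 * x (σ a) (σ b))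
    (hsum : ∀ a, ∑ b, x a b = ∑ b, x b a) {a b : ι} (hab : e a ≠ e b) : x a b = 0 := by
  have hbalance := sum_sum_sub_mul_eq_zero e hsum
  have hflipped : ∑ a, ∑ b, (e a - e b) * ((w b / w a) ^ 2 * x a b) = 0 := by
    have hx' : ∀ a b, (w b / w a) ^ 2 * x a b = x (σ a) (σ b) := fun a b => by
      rw [hflip, ← mul_assoc, ← mul_pow, div_mul_div_cancel₀ (hw a).ne', div_self (hw b).ne',
        one_pow, one_mul]
    simp only [hx']
    calc ∑ a, ∑ b, (e a - e b) * x (σ a) (σ b)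
        = ∑ a, ∑ b, (e (σ a) - e (σ b)) * x a b := by
          refine Fintype.sum_equiv (hσ.toPerm σ) _ _ fun a => ?_
          refine Fintype.sum_equiv (hσ.toPerm σ) _ _ fun b => ?_
          simp [hσ a, hσ b]
      _ = -∑ a, ∑ b, (e a - e b) * x a b := by
          simp only [he, ← Finset.sum_neg_distrib]
          congr! 2
          ring
      _ = 0 := by rw [hbalance, neg_zero]
  have hterm : ∀ a b, (e a - e b) * (1 - (w b / w a) ^ 2) * x a b ≤ 0 := fun a b => by
    rcases eq_or_ne (e a) (e b) with h | h
    · simp [h]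
    · exact mul_nonpos_of_nonpos_of_nonneg
        (sub_mul_one_sub_div_sq_neg (hw a) (hw b) (hew a b h)).le (hx a b)
  have htotal : ∑ a, ∑ b, (e a - e b) * (1 - (w b / w a) ^ 2) * x a b = 0 := by
    have hsplit : ∀ a b, (e a - e b) * (1 - (w b / w a) ^ 2) * x a b
        = (e a - e b) * x a b - (e a - e b) * ((w b / w a) ^ 2 * x a b) := fun _ _ => by ring
    simp only [hsplit, Finset.sum_sub_distrib, hbalance, hflipped, sub_zero]
  have hrow := (Finset.sum_eq_zero_iff_of_nonpos fun a _ => Finset.sum_nonpos fun b _ =>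
    hterm a b).mp htotal a (Finset.mem_univ a)
  have hentry := (Finset.sum_eq_zero_iff_of_nonpos fun b _ => hterm a b).mp hrow b
    (Finset.mem_univ b)
  exact (mul_eq_zero.mp hentry).resolve_left
    (sub_mul_one_sub_div_sq_neg (hw a) (hw b) (hew a b hab)).ne

end FlipScaling

namespace TracialState

variable {A : Type} [Ring A] [Algebra ℂ A] [StarRing A] (τ : TracialState A)

lemma ofReal_re_map_star_mul_self (a : A) :
    ((τ.toFun (star a * a)).re : ℂ) = τ.toFun (star a * a) :=
  Complex.ext rfl (Complex.nonneg_iff.mp (τ.nonneg' a)).2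

lemma re_map_star_mul_self_nonneg (a : A) : 0 ≤ (τ.toFun (star a * a)).re :=
  (Complex.nonneg_iff.mp (τ.nonneg' a)).1

lemma map_star_mul_self_smul_star [StarModule ℂ A] (c : ℂ) (b : A) :
    τ.toFun (star (c • star b) * (c • star b)) = Complex.normSq c * τ.toFun (star b * b) := by
  rw [star_smul, star_star, smul_mul_smul_comm, map_smul, smul_eq_mul, τ.tracial' b (star b),
    Complex.star_def, mul_comm ((starRingEnd ℂ) c), Complex.mul_conj]

variable {ι : Type*} [Fintype ι] [DecidableEq ι] {u : Matrix ι ι A}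

lemma sum_map_star_mul_self_col (hu : u.conjTranspose * u = 1) (b : ι) :
    ∑ a, τ.toFun (star (u a b) * u a b) = 1 := by
  have hbb := congrFun (congrFun hu b) b
  simp only [Matrix.mul_apply, Matrix.conjTranspose_apply, Matrix.one_apply_eq] at hbb
  rw [← map_sum, hbb, τ.map_one']

lemma sum_map_star_mul_self_row (hu : u * u.conjTranspose = 1) (a : ι) :
    ∑ b, τ.toFun (star (u a b) * u a b) = 1 := by
  have haa := congrFun (congrFun hu a) a
  simp only [Matrix.mul_apply, Matrix.conjTranspose_apply, Matrix.one_apply_eq] at haa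
  simp only [τ.tracial' (star _)]
  rw [← map_sum, haa, τ.map_one']

end TracialState

lemma Matrix.apply_eq_smul_star_of_mul_eq_mul_map_star {ι A : Type*} [Fintype ι] [DecidableEq ι]
    [Ring A] [Algebra ℂ A] [StarRing A] {σ : ι → ι} (hσ : σ.Involutive) {f : ι → ℂ}
    {F : Matrix ι ι ℂ} (hF : ∀ a c, F a c = if c = σ a then f a else 0) {u : Matrix ι ι A}
    (hu : u * F.map (algebraMap ℂ A) = F.map (algebraMap ℂ A) * u.map star) (a : ι) {b : ι}
    (hb : f b ≠ 0) : u a b = (f a / f b) • star (u (σ a) (σ b)) := by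
  have hab := congrFun (congrFun hu a) (σ b)
  simp only [Matrix.mul_apply, Matrix.map_apply, hF, hσ.injective.eq_iff,
    apply_ite (algebraMap ℂ A), map_zero, mul_ite, ite_mul, mul_zero, zero_mul,
    Finset.sum_ite_eq, Finset.sum_ite_eq', Finset.mem_univ, if_true] at hab
  rw [← Algebra.commutes, ← Algebra.smul_def, ← Algebra.smul_def] at hab
  rw [div_eq_inv_mul, mul_smul, ← hab, inv_smul_smul₀ hb]

section CaseI

variable {r : ℕ} {M : Fin r → ℕ} {s : ℕ}

def caseIFlip : CaseIIdx r M s → CaseIIdx r M s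
  | .inl ⟨ν, .inl j⟩ => .inl ⟨ν, .inr j⟩
  | .inl ⟨ν, .inr j⟩ => .inl ⟨ν, .inl j⟩
  | .inr t => .inr t

lemma caseIFlip_involutive : (caseIFlip : CaseIIdx r M s → CaseIIdx r M s).Involutive := by
  rintro (⟨ν, j | j⟩ | t) <;> rfl

noncomputable def caseIWeight (q : Fin r → ℝ) : CaseIIdx r M s → ℝ
  | .inl ⟨ν, .inl _⟩ => q ν
  | .inl ⟨ν, .inr _⟩ => (q ν)⁻¹
  | .inr _ => 1

def caseISign : CaseIIdx r M s → ℝ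
  | .inl ⟨_, .inl _⟩ => 1
  | .inl ⟨_, .inr _⟩ => -1
  | .inr _ => 0

lemma caseISign_flip (a : CaseIIdx r M s) : caseISign (caseIFlip a) = -caseISign a := by
  rcases a with ⟨ν, j | j⟩ | t <;> simp [caseIFlip, caseISign]

variable {q : Fin r → ℝ}

lemma caseIWeight_pos (hq0 : ∀ ν, 0 < q ν) (a : CaseIIdx r M s) : 0 < caseIWeight q a := by
  rcases a with ⟨ν, j | j⟩ | t
  · exact hq0 ν
  · exact inv_pos.mpr (hq0 ν)
  · exact one_pos

lemma FCaseI_apply (a c : CaseIIdx r M s) :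
    FCaseI r q M s a c = if c = caseIFlip a then (caseIWeight q a : ℂ) else 0 := by
  rcases a with ⟨ρ, j | j⟩ | t <;> rcases c with ⟨μ, k | k⟩ | p <;>
    simp only [FCaseI, caseIFlip, caseIWeight, Sum.inl.injEq, reduceCtorEq, if_false]
  all_goals first
    | (obtain rfl | hne := eq_or_ne ρ μ) <;> simp_all [Fin.ext_iff, eq_comm]
    | simp [eq_comm]

lemma caseISign_sub_mul_caseIWeight_sub_neg (hq0 : ∀ ν, 0 < q ν) (hq1 : ∀ ν, q ν < 1)
    {a b : CaseIIdx r M s} (hab : caseISign a ≠ caseISign b) :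
    (caseISign a - caseISign b) * (caseIWeight q a - caseIWeight q b) < 0 := by
  have hinv : ∀ ν, 1 < (q ν)⁻¹ := fun ν => (one_lt_inv₀ (hq0 ν)).mpr (hq1 ν)
  rcases a with ⟨ρ, j | j⟩ | t <;> rcases b with ⟨μ, k | k⟩ | p <;>
    simp only [caseISign, caseIWeight, ne_eq, not_true_eq_false] at hab ⊢
  · linarith [hq1 ρ, hinv μ]
  · linarith [hq1 ρ]
  · linarith [hinv ρ, hq1 μ]
  · linarith [hinv ρ]
  · linarith [hq1 μ]
  · linarith [hinv μ]

theorem PolO.map_star_mul_self_eq_zero_of_caseISign_ne (hq0 : ∀ ν, 0 < q ν)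
    (hq1 : ∀ ν, q ν < 1) (P : PolO (FCaseI r q M s)) (τ : TracialState P.carrier)
    {a b : CaseIIdx r M s} (hab : caseISign a ≠ caseISign b) :
    τ.toFun (star (P.u a b) * P.u a b) = 0 := by
  have hw := caseIWeight_pos (M := M) (s := s) hq0
  set x : CaseIIdx r M s → CaseIIdx r M s → ℝ :=
    fun a b => (τ.toFun (star (P.u a b) * P.u a b)).re with hx
  have hflip : ∀ a b,
      x a b = (caseIWeight q a / caseIWeight q b) ^ 2 * x (caseIFlip a) (caseIFlip b) := by
    intro a b
    simp only [hx]
    rw [Matrix.apply_eq_smul_star_of_mul_eq_mul_map_star caseIFlip_involutive FCaseI_apply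
      P.rel.2.2 a (Complex.ofReal_ne_zero.mpr (hw b).ne'), τ.map_star_mul_self_smul_star,
      ← Complex.ofReal_div, Complex.normSq_ofReal, Complex.re_ofReal_mul, sq]
  have hsum : ∀ a, ∑ b, x a b = ∑ b, x b a := by
    intro a
    rw [hx, ← Complex.re_sum, ← Complex.re_sum, τ.sum_map_star_mul_self_row P.rel.1,
      τ.sum_map_star_mul_self_col P.rel.2.1]
  have hxab : x a b = 0 := eq_zero_of_flip_scaling caseIFlip_involutive hw caseISign_flip
    (fun _ _ => caseISign_sub_mul_caseIWeight_sub_neg hq0 hq1)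
    (fun _ _ => τ.re_map_star_mul_self_nonneg _) hflip hsum hab
  rw [← τ.ofReal_re_map_star_mul_self]
  exact_mod_cast hxab

end CaseI

theorem caseI_C_blocks_in_kac_general (r : ℕ) (q : Fin r → ℝ) (hq0 : ∀ ν, 0 < q ν)
    (hq1 : ∀ ν, q ν < 1) (M : Fin r → ℕ)
    (s : ℕ) (P : PolO (FCaseI r q M s)) :
    (∀ (τ : TracialState P.carrier) (ρ μ : Fin r),
        τ.toFun (∑ k : Fin (M μ), ∑ j : Fin (M ρ),
          star (P.u (.inl ⟨ρ, .inr j⟩) (.inl ⟨μ, .inl k⟩)) *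
            P.u (.inl ⟨ρ, .inr j⟩) (.inl ⟨μ, .inl k⟩)) = 0) ∧
      ∀ (ρ μ : Fin r) (j : Fin (M ρ)) (k : Fin (M μ)),
        P.u (.inl ⟨ρ, .inr j⟩) (.inl ⟨μ, .inl k⟩) ∈ kacIdeal P.carrier := by
  have hC : ∀ (τ : TracialState P.carrier) (ρ μ : Fin r) (j : Fin (M ρ)) (k : Fin (M μ)),
      τ.toFun (star (P.u (.inl ⟨ρ, .inr j⟩) (.inl ⟨μ, .inl k⟩)) *
        P.u (.inl ⟨ρ, .inr j⟩) (.inl ⟨μ, .inl k⟩)) = 0 := fun τ _ _ _ _ =>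
    P.map_star_mul_self_eq_zero_of_caseISign_ne hq0 hq1 τ (by norm_num [caseISign])
  refine ⟨fun τ ρ μ => ?_, fun ρ μ j k τ => hC τ ρ μ j k⟩
  simp only [map_sum, hC, Finset.sum_const_zero]

/-- in the Case I setting, every tracial state `τ` on `Pol(O_F⁺)` satisfies
`τ(Tr(C_{ρμ}^* C_{ρμ})) = 0` for all `ρ,μ`; in particular every entry of every block
`C_{ρμ}` lies in the Kac ideal. -/
theorem caseI_C_blocks_in_kac (r : ℕ) (hr : 1 ≤ r) (q : Fin r → ℝ) (hq0 : ∀ ν, 0 < q ν)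
    (hq1 : ∀ ν, q ν < 1) (hmono : StrictMono q) (M : Fin r → ℕ) (hM : ∀ ν, 1 ≤ M ν)
    (s : ℕ) (P : PolO (FCaseI r q M s)) :
    (∀ (τ : TracialState P.carrier) (ρ μ : Fin r),
        τ.toFun (∑ k : Fin (M μ), ∑ j : Fin (M ρ),
          star (P.u (.inl ⟨ρ, .inr j⟩) (.inl ⟨μ, .inl k⟩)) *
            P.u (.inl ⟨ρ, .inr j⟩) (.inl ⟨μ, .inl k⟩)) = 0) ∧
      ∀ (ρ μ : Fin r) (j : Fin (M ρ)) (k : Fin (M μ)),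
        P.u (.inl ⟨ρ, .inr j⟩) (.inl ⟨μ, .inl k⟩) ∈ kacIdeal P.carrier :=
  caseI_C_blocks_in_kac_general r q hq0 hq1 M s P
end
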